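/- arXiv:2303.01738 — 7 statements merged into one kernel-verified Lean document; each statement's English description precedes it below -/
import Mathlib

section
/- Let (X,d) be a compact metric space, T : X → X continuous, and μ a Borel probability measure on X. Then for every ε > 0, the lower neutralized Brin–Katok local entropy at scale ε/2 is bounded above by the neutralized Katok entropy at scale ε: h̲_μ^{B̃K}(T, ε/2) ≤ h_μ^{K̃}(T, ε). -/
open Filter Set MeasureTheory ENNReal NNReal Topology

variable {X : Type*}

/-- The (neutralized) Bowen open ball of order `n` and radius `r` around `x`,
with respect to the distance `d` and the map `T`. -/
def bowenBall (d : X → X → ℝ) (T : X → X) (n : ℕ) (x : X) (r : ℝ) : Set X :=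
  {y | ∀ j < n, d (T^[j] x) (T^[j] y) < r}

/-- The neutralized radius `e^{-nε}`. -/
noncomputable def nrad (ε : ℝ) (n : ℕ) : ℝ := Real.exp (-(n : ℝ) * ε)

/-- `M_{N,ε}^s(Z)`: the infimum of `∑ e^{-n_i s}` over all finite or countable covers of `Z`
by neutralized Bowen balls `B_{n_i}(x_i, e^{-n_i ε})` with `n_i ≥ N`. -/
noncomputable def MN (d : X → X → ℝ) (T : X → X) (ε : ℝ) (N : ℕ) (s : ℝ) (Z : Set X) : ℝ≥0∞ :=
  ⨅ (C : Set (X × ℕ)) (_ : C.Countable) (_ : ∀ p ∈ C, N ≤ p.2)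
    (_ : Z ⊆ ⋃ p ∈ C, bowenBall d T p.2 p.1 (nrad ε p.2)),
    ∑' p : C, ENNReal.ofReal (Real.exp (-(p.1.2 : ℝ) * s))

/-- `M_ε^s(Z) = lim_{N → ∞} M_{N,ε}^s(Z)` (the quantity is nondecreasing in `N`). -/
noncomputable def Mlim (d : X → X → ℝ) (T : X → X) (ε s : ℝ) (Z : Set X) : ℝ≥0∞ :=
  ⨆ N : ℕ, MN d T ε N s Z

/-- The critical value `M_ε(Z) = inf {s ≥ 0 : M_ε^s(Z) = 0}`. -/
noncomputable def Mcrit (d : X → X → ℝ) (T : X → X) (ε : ℝ) (Z : Set X) : ℝ≥0∞ :=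
  ⨅ (s : ℝ≥0) (_ : Mlim d T ε (s : ℝ) Z = 0), (s : ℝ≥0∞)

/-- The neutralized Bowen topological entropy `h_top^{B̃}(T,Z) = lim_{ε→0} M_ε(Z) = inf_{ε>0} M_ε(Z)`. -/
noncomputable def htopB (d : X → X → ℝ) (T : X → X) (Z : Set X) : ℝ≥0∞ :=
  ⨅ (ε : ℝ) (_ : 0 < ε), Mcrit d T ε Z

/-- `-log a`, as a map `ℝ≥0∞ → ℝ≥0∞` (with value `∞` at `0`). -/
noncomputable def negLog (a : ℝ≥0∞) : ℝ≥0∞ :=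
  if a = 0 then ∞ else ENNReal.ofReal (-Real.log a.toReal)


/-! ### Auxiliary lemmas -/

lemma isOpen_bowenBall {X : Type*} [MetricSpace X] {T : X → X} (hT : Continuous T)
    (n : ℕ) (x : X) (r : ℝ) : IsOpen (bowenBall dist T n x r) := by
  have h : bowenBall dist T n x r
      = ⋂ j ∈ Finset.range n, (T^[j]) ⁻¹' Metric.ball (T^[j] x) r := by
    ext y
    simp [bowenBall, Metric.mem_ball, dist_comm, Finset.mem_range]
  rw [h]
  exact isOpen_biInter_finset fun j _ =>
    (Metric.isOpen_ball).preimage (hT.iterate j)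

lemma bowenBall_subset {X : Type*} [MetricSpace X] (T : X → X) {ε : ℝ} (hε : 0 < ε) {n : ℕ}
    (hn : 2 * Real.log 2 / ε ≤ (n : ℝ)) {z x : X}
    (hx : x ∈ bowenBall dist T n z (nrad ε n)) :
    bowenBall dist T n z (nrad ε n) ⊆ bowenBall dist T n x (nrad (ε / 2) n) := by
  have key : 2 * nrad ε n ≤ nrad (ε / 2) n := by
    have hlog : 2 * Real.log 2 ≤ (n : ℝ) * ε := by
      rw [div_le_iff₀ hε] at hn; linarith
    have h2 : (2 : ℝ) ≤ Real.exp ((n : ℝ) * ε / 2) :=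
      calc (2 : ℝ) = Real.exp (Real.log 2) := (Real.exp_log (by norm_num)).symm
        _ ≤ Real.exp ((n : ℝ) * ε / 2) := Real.exp_le_exp.mpr (by linarith)
    have heq : nrad (ε / 2) n = nrad ε n * Real.exp ((n : ℝ) * ε / 2) := by
      unfold nrad; rw [← Real.exp_add]; ring_nf
    have hpos : (0 : ℝ) < nrad ε n := Real.exp_pos _
    rw [heq]
    nlinarith
  intro y hy j hj
  have h1 := hx j hj
  have h2 := hy j hj
  have htri : dist (T^[j] x) (T^[j] y)
      ≤ dist (T^[j] z) (T^[j] x) + dist (T^[j] z) (T^[j] y) := dist_triangle_left _ _ _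
  linarith

lemma measure_le_of_lt_negLog_div {X : Type*} [MeasurableSpace X]
    {μ : Measure X} [IsProbabilityMeasure μ] {A : Set X} {s : ℝ≥0} {n : ℕ}
    (h : (s : ℝ≥0∞) < negLog (μ A) / (n : ℝ≥0∞)) :
    μ A ≤ ENNReal.ofReal (Real.exp (-(n : ℝ) * s)) := by
  rcases Nat.eq_zero_or_pos n with hn | hn
  · subst hn
    simp only [Nat.cast_zero, neg_zero, zero_mul, Real.exp_zero, ENNReal.ofReal_one]
    exact prob_le_one
  rcases eq_or_ne (μ A) 0 with h0 | h0
  · simp [h0]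
  have hfin : μ A ≠ ∞ := measure_ne_top μ A
  have hle1 : μ A ≤ 1 := prob_le_one
  have hnl : negLog (μ A) = ENNReal.ofReal (-Real.log (μ A).toReal) := by
    rw [negLog, if_neg h0]
  have hmul : (s : ℝ≥0∞) * (n : ℝ≥0∞) < negLog (μ A) := by
    rw [← ENNReal.lt_div_iff_mul_lt (Or.inl (by exact_mod_cast hn.ne'))
      (Or.inl (by simp))]
    exact h
  rw [hnl] at hmul
  have hfin2 : (s : ℝ≥0∞) * (n : ℝ≥0∞) ≠ ∞ := by
    exact ENNReal.mul_ne_top ENNReal.coe_ne_top (by simp)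
  have hreal : (s : ℝ) * (n : ℝ) < -Real.log (μ A).toReal := by
    have := (ENNReal.lt_ofReal_iff_toReal_lt hfin2).mp hmul
    simpa using this
  have hpos : 0 < (μ A).toReal := ENNReal.toReal_pos h0 hfin
  have hlt : (μ A).toReal < Real.exp (-(n : ℝ) * s) := by
    have hlog : Real.log (μ A).toReal < -(n : ℝ) * s := by linarith
    exact (Real.log_lt_iff_lt_exp hpos).mp hlog
  calc μ A = ENNReal.ofReal (μ A).toReal := (ENNReal.ofReal_toReal hfin).symm
    _ ≤ ENNReal.ofReal (Real.exp (-(n : ℝ) * s)) := ENNReal.ofReal_le_ofReal hlt.le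

/-- The lower neutralized Brin–Katok local entropy of `μ` at scale `ε`:
`∫ liminf_{n→∞} -(1/n) log μ(B_n(x, e^{-nε})) dμ(x)`. -/
noncomputable def lowerBK [MeasurableSpace X] (d : X → X → ℝ) (T : X → X)
    (μ : Measure X) (ε : ℝ) : ℝ≥0∞ :=
  ∫⁻ x, liminf (fun n : ℕ => negLog (μ (bowenBall d T n x (nrad ε n))) / (n : ℝ≥0∞)) atTop ∂μ

/-- `Λ_{N,ε}^s(μ,δ)`: the infimum of `∑ e^{-n_i s}` over all finite or countable families of
neutralized Bowen balls with `n_i ≥ N` whose union has `μ`-measure `> 1 - δ`. -/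
noncomputable def LambdaN [MeasurableSpace X] (d : X → X → ℝ) (T : X → X) (ε : ℝ) (N : ℕ)
    (s : ℝ) (μ : Measure X) (δ : ℝ) : ℝ≥0∞ :=
  ⨅ (C : Set (X × ℕ)) (_ : C.Countable) (_ : ∀ p ∈ C, N ≤ p.2)
    (_ : ENNReal.ofReal (1 - δ) < μ (⋃ p ∈ C, bowenBall d T p.2 p.1 (nrad ε p.2))),
    ∑' p : C, ENNReal.ofReal (Real.exp (-(p.1.2 : ℝ) * s))

/-- `Λ_ε^s(μ,δ) = lim_{N→∞} Λ_{N,ε}^s(μ,δ)`. -/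
noncomputable def LambdaLim [MeasurableSpace X] (d : X → X → ℝ) (T : X → X) (ε s : ℝ)
    (μ : Measure X) (δ : ℝ) : ℝ≥0∞ :=
  ⨆ N : ℕ, LambdaN d T ε N s μ δ

/-- The critical value `Λ_ε(μ,δ) = inf {s ≥ 0 : Λ_ε^s(μ,δ) = 0}`. -/
noncomputable def LambdaCrit [MeasurableSpace X] (d : X → X → ℝ) (T : X → X) (ε : ℝ)
    (μ : Measure X) (δ : ℝ) : ℝ≥0∞ :=
  ⨅ (s : ℝ≥0) (_ : LambdaLim d T ε (s : ℝ) μ δ = 0), (s : ℝ≥0∞)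

/-- The neutralized Katok entropy of `μ` at scale `ε`:
`h_μ^{K̃}(T,ε) = lim_{δ→0} Λ_ε(μ,δ)` (the quantity is monotone in `δ`). -/
noncomputable def katok [MeasurableSpace X] (d : X → X → ℝ) (T : X → X) (ε : ℝ)
    (μ : Measure X) : ℝ≥0∞ :=
  ⨆ (δ : ℝ) (_ : 0 < δ) (_ : δ < 1), LambdaCrit d T ε μ δ

/-- The lower neutralized Brin–Katok local entropy at scale `ε/2` is bounded above by the
neutralized Katok entropy at scale `ε`: `h̲_μ^{B̃K}(T, ε/2) ≤ h_μ^{K̃}(T, ε)`. -/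
theorem lowerBK_le_katok {X : Type*} [MetricSpace X] [CompactSpace X]
    [MeasurableSpace X] [BorelSpace X]
    (T : X → X) (hT : Continuous T) (μ : Measure X) [IsProbabilityMeasure μ]
    (ε : ℝ) (hε : 0 < ε) :
    lowerBK dist T μ (ε / 2) ≤ katok dist T ε μ := by
  by_contra hcon
  push_neg at hcon
  obtain ⟨s, hs1, hs2⟩ := ENNReal.lt_iff_exists_nnreal_btwn.mp hcon
  refine absurd ?_ hs2.not_ge
  -- it suffices to show `lowerBK ≤ s`
  set f : X → ℝ≥0∞ := fun x =>
    liminf (fun n : ℕ => negLog (μ (bowenBall dist T n x (nrad (ε / 2) n))) / (n : ℝ≥0∞)) atTop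
    with hf
  set S : Set X := {x | (s : ℝ≥0∞) < f x} with hS
  -- the increasing family of sets
  set A : ℕ → Set X := fun M => {x | ∀ n, M ≤ n →
      μ (bowenBall dist T n x (nrad (ε / 2) n)) ≤ ENNReal.ofReal (Real.exp (-(n : ℝ) * s))}
    with hA
  have hAmono : Monotone A := by
    intro M M' hMM' x hx n hn
    exact hx n (le_trans hMM' hn)
  have hSA : S ⊆ ⋃ M, A M := by
    intro x hx
    have hev : ∀ᶠ n : ℕ in atTop,
        (s : ℝ≥0∞) < negLog (μ (bowenBall dist T n x (nrad (ε / 2) n))) / (n : ℝ≥0∞) :=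
      eventually_lt_of_lt_liminf hx
    obtain ⟨M, hM⟩ := eventually_atTop.mp hev
    exact Set.mem_iUnion.mpr ⟨M, fun n hn => measure_le_of_lt_negLog_div (hM n hn)⟩
  -- key estimate : μ (A M) ≤ ofReal δ for every δ ∈ (0,1)
  have hAδ : ∀ δ : ℝ, 0 < δ → δ < 1 → ∀ M : ℕ, μ (A M) ≤ ENNReal.ofReal δ := by
    intro δ hδ0 hδ1 M
    have hcrit : LambdaCrit dist T ε μ δ < (s : ℝ≥0∞) := by
      refine lt_of_le_of_lt ?_ hs1
      calc LambdaCrit dist T ε μ δ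
          ≤ ⨆ (_ : 0 < δ) (_ : δ < 1), LambdaCrit dist T ε μ δ := by
            exact le_iSup₂_of_le hδ0 hδ1 le_rfl
        _ ≤ katok dist T ε μ := le_iSup (fun δ' => ⨆ (_ : 0 < δ') (_ : δ' < 1),
            LambdaCrit dist T ε μ δ') δ
    obtain ⟨s', hs'lt⟩ := iInf_lt_iff.mp hcrit
    obtain ⟨hs'0, hs'coe⟩ := iInf_lt_iff.mp hs'lt
    have hs's : (s' : ℝ) ≤ (s : ℝ) := by exact_mod_cast hs'coe.le
    refine ENNReal.le_of_forall_pos_le_add fun η hη _ => ?_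
    set N : ℕ := max M ⌈2 * Real.log 2 / ε⌉₊ with hN
    have hLN : LambdaN dist T ε N (s' : ℝ) μ δ < (η : ℝ≥0∞) := by
      have : LambdaN dist T ε N (s' : ℝ) μ δ ≤ LambdaLim dist T ε (s' : ℝ) μ δ :=
        le_iSup (fun N => LambdaN dist T ε N (s' : ℝ) μ δ) N
      rw [hs'0] at this
      exact lt_of_le_of_lt this (by exact_mod_cast hη)
    obtain ⟨C, hC⟩ := iInf_lt_iff.mp hLN
    obtain ⟨hCc, hC⟩ := iInf_lt_iff.mp hC
    obtain ⟨hCN, hC⟩ := iInf_lt_iff.mp hC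
    obtain ⟨hCμ, hsum⟩ := iInf_lt_iff.mp hC
    set U : Set X := ⋃ p ∈ C, bowenBall dist T p.2 p.1 (nrad ε p.2) with hU
    have hUmeas : MeasurableSet U :=
      MeasurableSet.biUnion hCc fun p _ => (isOpen_bowenBall hT _ _ _).measurableSet
    -- the part of A M inside U
    have hterm : ∀ p : X × ℕ, p ∈ C →
        μ (A M ∩ bowenBall dist T p.2 p.1 (nrad ε p.2))
          ≤ ENNReal.ofReal (Real.exp (-(p.2 : ℝ) * s)) := by
      intro p hp
      rcases (A M ∩ bowenBall dist T p.2 p.1 (nrad ε p.2)).eq_empty_or_nonempty with he | hne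
      · simp [he]
      obtain ⟨x, hxA, hxB⟩ := hne
      have hn2 : 2 * Real.log 2 / ε ≤ (p.2 : ℝ) := by
        have h1 : (⌈2 * Real.log 2 / ε⌉₊ : ℕ) ≤ p.2 := le_trans (le_max_right _ _) (hCN p hp)
        calc 2 * Real.log 2 / ε ≤ (⌈2 * Real.log 2 / ε⌉₊ : ℝ) := Nat.le_ceil _
          _ ≤ (p.2 : ℝ) := by exact_mod_cast h1
      have hsub := bowenBall_subset T hε hn2 hxB
      calc μ (A M ∩ bowenBall dist T p.2 p.1 (nrad ε p.2))
          ≤ μ (bowenBall dist T p.2 x (nrad (ε / 2) p.2)) :=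
            measure_mono (le_trans Set.inter_subset_right hsub)
        _ ≤ ENNReal.ofReal (Real.exp (-(p.2 : ℝ) * s)) :=
            hxA p.2 (le_trans (le_max_left _ _) (hCN p hp))
    have hinter : μ (A M ∩ U) ≤ (η : ℝ≥0∞) := by
      have h1 : A M ∩ U = ⋃ p ∈ C, (A M ∩ bowenBall dist T p.2 p.1 (nrad ε p.2)) := by
        rw [hU, Set.inter_iUnion₂]
      calc μ (A M ∩ U)
          ≤ ∑' p : C, μ (A M ∩ bowenBall dist T p.1.2 p.1.1 (nrad ε p.1.2)) := by
            rw [h1]; exact measure_biUnion_le μ hCc _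
        _ ≤ ∑' p : C, ENNReal.ofReal (Real.exp (-(p.1.2 : ℝ) * s)) :=
            ENNReal.tsum_le_tsum fun p => hterm p.1 p.2
        _ ≤ ∑' p : C, ENNReal.ofReal (Real.exp (-(p.1.2 : ℝ) * (s' : ℝ))) := by
            refine ENNReal.tsum_le_tsum fun p => ENNReal.ofReal_le_ofReal ?_
            apply Real.exp_le_exp.mpr
            have : (0 : ℝ) ≤ (p.1.2 : ℝ) := Nat.cast_nonneg _
            nlinarith
        _ ≤ (η : ℝ≥0∞) := hsum.le
    have hdiff : μ (A M \ U) ≤ ENNReal.ofReal δ := by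
      have h1 : μ (A M \ U) ≤ μ Uᶜ := measure_mono (Set.diff_subset_compl _ _)
      have h2 : μ Uᶜ = 1 - μ U := by
        rw [measure_compl hUmeas (measure_ne_top μ U), measure_univ]
      rw [h2] at h1
      calc μ (A M \ U) ≤ 1 - μ U := h1
        _ ≤ 1 - ENNReal.ofReal (1 - δ) := tsub_le_tsub_left hCμ.le _
        _ = ENNReal.ofReal δ := by
            rw [← ENNReal.ofReal_one, ← ENNReal.ofReal_sub _ (by linarith)]
            norm_num
    calc μ (A M) ≤ μ (A M ∩ U) + μ (A M \ U) := measure_le_inter_add_diff μ _ _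
      _ ≤ (η : ℝ≥0∞) + ENNReal.ofReal δ := add_le_add hinter hdiff
      _ = ENNReal.ofReal δ + (η : ℝ≥0∞) := add_comm _ _
  -- conclude μ S = 0
  have hSδ : ∀ δ : ℝ, 0 < δ → δ < 1 → μ S ≤ ENNReal.ofReal δ := by
    intro δ hδ0 hδ1
    calc μ S ≤ μ (⋃ M, A M) := measure_mono hSA
      _ = ⨆ M, μ (A M) := hAmono.measure_iUnion
      _ ≤ ENNReal.ofReal δ := iSup_le fun M => hAδ δ hδ0 hδ1 M
  have hS0 : μ S = 0 := by
    refine le_antisymm ?_ zero_le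
    refine ENNReal.le_of_forall_pos_le_add fun η hη _ => ?_
    rw [zero_add]
    have hδ0 : (0 : ℝ) < min (1 / 2) (η : ℝ) := lt_min (by norm_num) (by exact_mod_cast hη)
    calc μ S ≤ ENNReal.ofReal (min (1 / 2) (η : ℝ)) :=
          hSδ _ hδ0 (lt_of_le_of_lt (min_le_left _ _) (by norm_num))
      _ ≤ ENNReal.ofReal (η : ℝ) := ENNReal.ofReal_le_ofReal (min_le_right _ _)
      _ = (η : ℝ≥0∞) := ENNReal.ofReal_coe_nnreal
  -- conclude
  have hae : ∀ᵐ x ∂μ, f x ≤ (s : ℝ≥0∞) := by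
    rw [ae_iff]
    have : {x | ¬ f x ≤ (s : ℝ≥0∞)} = S := by
      ext x; simp [hS, not_le]
    rw [this]; exact hS0
  calc lowerBK dist T μ (ε / 2) = ∫⁻ x, f x ∂μ := rfl
    _ ≤ ∫⁻ _, (s : ℝ≥0∞) ∂μ := lintegral_mono_ae hae
    _ = (s : ℝ≥0∞) := by rw [lintegral_const, measure_univ, mul_one]
end

section
/- Let (X,d) be a compact metric space, T : X → X continuous, Z a non-empty subset of X, and ε > 0, s > 0, θ > 0. Then for all sufficiently large N ∈ ℕ: M_{N, ε/2}^{s+θ}(Z) ≤ W_{N, ε}^{s}(Z) ≤ M_{N, ε}^{s}(Z). -/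
open Filter Set MeasureTheory ENNReal NNReal Topology

variable {X : Type*}

/-- `W_{N,ε}^s(Z)`: the infimum of `∑ c_i e^{-n_i s}` over all finite or countable families
`{(B_{n_i}(x_i, e^{-n_i ε}), c_i)}` with `0 < c_i < ∞` and `n_i ≥ N` such that
`∑ c_i χ_{B_{n_i}(x_i, e^{-n_i ε})} ≥ χ_Z` pointwise. -/
noncomputable def WN (d : X → X → ℝ) (T : X → X) (ε : ℝ) (N : ℕ) (s : ℝ) (Z : Set X) : ℝ≥0∞ :=
  ⨅ (S : Set ℕ) (x : ℕ → X) (m : ℕ → ℕ) (c : ℕ → ℝ≥0∞)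
    (_ : ∀ i ∈ S, 0 < c i ∧ c i < ∞ ∧ N ≤ m i)
    (_ : ∀ y ∈ Z, 1 ≤ ∑' i : S,
      c i.1 * (bowenBall d T (m i.1) (x i.1) (nrad ε (m i.1))).indicator (fun _ => (1 : ℝ≥0∞)) y),
    ∑' i : S, c i.1 * ENNReal.ofReal (Real.exp (-(m i.1 : ℝ) * s))

lemma mem_bowenBall {d : X → X → ℝ} {T : X → X} {n : ℕ} {x y : X} {r : ℝ} :
    y ∈ bowenBall d T n x r ↔ ∀ j < n, d (T^[j] x) (T^[j] y) < r := Iff.rfl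

open Classical in
lemma fiber_tsum (S : Set ℕ) (m : ℕ → ℕ) (g : ℕ → ℝ≥0∞) :
    ∑' (n : ℕ) (i : ℕ), ({i | i ∈ S ∧ m i = n}).indicator g i
      = ∑' i : ℕ, S.indicator g i := by
  rw [ENNReal.tsum_comm]
  refine tsum_congr fun i => ?_
  by_cases hi : i ∈ S
  · have h1 : ∀ n : ℕ, ({i | i ∈ S ∧ m i = n}).indicator g i = (if n = m i then g i else 0) := by
      intro n
      by_cases h : n = m i
      · rw [if_pos h, Set.indicator_of_mem (show i ∈ {i | i ∈ S ∧ m i = n} from ⟨hi, h.symm⟩)]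
      · rw [if_neg h, Set.indicator_of_notMem
          (show i ∉ {i | i ∈ S ∧ m i = n} from fun hc => h hc.2.symm)]
    rw [tsum_congr h1, tsum_ite_eq, Set.indicator_of_mem hi]
  · have h1 : ∀ n : ℕ, ({i | i ∈ S ∧ m i = n}).indicator g i = 0 := fun n =>
      Set.indicator_of_notMem (fun hc => hi hc.1) g
    rw [tsum_congr h1, tsum_zero, Set.indicator_of_notMem hi]

open Classical in
lemma bowen_selection [MetricSpace X] [Nonempty X] (T : X → X) (n : ℕ) (r : ℝ) (hr : 0 < r)
    (x : ℕ → X) (c : ℕ → ℝ≥0∞) (In : Set ℕ) (Zn : Set X) (τ : ℝ≥0∞) (hτ : τ ≠ 0)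
    (hw : ∀ y ∈ Zn, τ ≤ ∑' i : ℕ,
      In.indicator (fun i =>
        c i * (bowenBall dist T n (x i) r).indicator (fun _ => (1:ℝ≥0∞)) y) i) :
    ∃ J ⊆ In, (∀ y ∈ Zn, ∃ j ∈ J, ∀ k < n, dist (T^[k] (x j)) (T^[k] y) < 5 * r) ∧
      (∑' j : ℕ, J.indicator (fun _ => τ) j) ≤ ∑' i : ℕ, In.indicator c i := by
  classical
  set B : ℕ → Set X := fun i => bowenBall dist T n (x i) r with hB
  have hwif : ∀ y ∈ Zn, τ ≤ ∑' i : ℕ,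
      (if i ∈ In then c i * (B i).indicator (fun _ => (1:ℝ≥0∞)) y else 0) := by
    intro y hy
    exact (hw y hy).trans (le_of_eq (tsum_congr fun i => Set.indicator_apply _ _ _))
  set In' : Set ℕ := {i | i ∈ In ∧ ∃ z ∈ Zn, z ∈ B i} with hIn'
  set R : ℕ → ℕ → Prop := fun i j => ∃ k < n, 4 * r ≤ dist (T^[k] (x i)) (T^[k] (x j)) with hR
  have hRsymm : Symmetric R := by
    rintro i j ⟨k, hk, hd⟩; exact ⟨k, hk, by rwa [dist_comm]⟩
  obtain ⟨J, hJmem, hJmax⟩ : ∃ J, J ∈ {J : Set ℕ | J ⊆ In' ∧ J.Pairwise R} ∧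
      ∀ J' ∈ {J : Set ℕ | J ⊆ In' ∧ J.Pairwise R}, J ⊆ J' → J' = J := by
    obtain ⟨J, hJ⟩ := zorn_subset {J : Set ℕ | J ⊆ In' ∧ J.Pairwise R} (by
      intro ch hchsub hchain
      refine ⟨⋃₀ ch, ⟨sUnion_subset fun s hs => (hchsub hs).1, ?_⟩,
        fun s hs => subset_sUnion_of_mem hs⟩
      intro i hi j hj hij
      obtain ⟨a, ha, hia⟩ := hi
      obtain ⟨b, hb, hjb⟩ := hj
      rcases hchain.total ha hb with hab | hba
      · exact (hchsub hb).2 (hab hia) hjb hij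
      · exact (hchsub ha).2 hia (hba hjb) hij)
    exact ⟨J, hJ.prop, fun J' hJ' hsub => le_antisymm (hJ.le_of_ge hJ' hsub) hsub⟩
  obtain ⟨hJsub', hJpair⟩ := hJmem
  have hJsub : J ⊆ In := fun j hj => (hJsub' hj).1
  have hclose : ∀ i ∈ In', ∃ j ∈ J, ∀ k < n, dist (T^[k] (x i)) (T^[k] (x j)) < 4 * r := by
    intro i hi
    by_contra hcon
    push_neg at hcon
    have hiJ : i ∉ J := by
      intro hiJ
      obtain ⟨k, hk, hd⟩ := hcon i hiJ
      simp only [dist_self] at hd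
      linarith
    have hins : insert i J ∈ {J : Set ℕ | J ⊆ In' ∧ J.Pairwise R} := by
      refine ⟨insert_subset hi hJsub', ?_⟩
      haveI : Std.Symm R := ⟨fun a b h => hRsymm h⟩
      rw [Set.pairwise_insert_of_symm]
      exact ⟨hJpair, fun b hb _ => hcon b hb⟩
    have := hJmax _ hins (subset_insert i J)
    exact hiJ (this ▸ mem_insert i J)
  refine ⟨J, hJsub, ?_, ?_⟩
  · -- cover
    intro y hy
    have h1 := hwif y hy
    have h2 : ∃ i, (if i ∈ In then c i * (B i).indicator (fun _ => (1:ℝ≥0∞)) y else 0) ≠ 0 := by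
      by_contra h
      push_neg at h
      rw [ENNReal.tsum_eq_zero.2 h] at h1
      exact hτ (le_zero_iff.1 h1)
    obtain ⟨i, hi0⟩ := h2
    have hiIn : i ∈ In := by
      by_contra h; simp [h] at hi0
    have hyB : y ∈ B i := by
      by_contra h
      rw [if_pos hiIn, Set.indicator_of_notMem h, mul_zero] at hi0
      exact hi0 rfl
    obtain ⟨j, hjJ, hjcl⟩ := hclose i ⟨hiIn, y, hy, hyB⟩
    refine ⟨j, hjJ, fun k hk => ?_⟩
    have h3 := hjcl k hk
    have h4 : dist (T^[k] (x i)) (T^[k] y) < r := hyB k hk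
    have h5 := dist_triangle (T^[k] (x j)) (T^[k] (x i)) (T^[k] y)
    have h6 : dist (T^[k] (x j)) (T^[k] (x i)) = dist (T^[k] (x i)) (T^[k] (x j)) := dist_comm _ _
    linarith
  · -- counting
    have hz : ∀ j, j ∈ J → ∃ z, z ∈ Zn ∧ z ∈ B j := by
      intro j hj
      obtain ⟨z, hz1, hz2⟩ := (hJsub' hj).2
      exact ⟨z, hz1, hz2⟩
    choose! z hzZ hzB using hz
    set E : ℕ → Set ℕ := fun j => {i | i ∈ In ∧ z j ∈ B i} with hE
    have hτE : ∀ j ∈ J, τ ≤ ∑' i : ℕ, (if i ∈ E j then c i else 0) := by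
      intro j hj
      refine (hwif (z j) (hzZ j hj)).trans (le_of_eq (tsum_congr fun i => ?_))
      by_cases hiIn : i ∈ In
      · by_cases hzB' : z j ∈ B i
        · rw [if_pos hiIn, Set.indicator_of_mem hzB', mul_one,
            if_pos (show i ∈ E j from ⟨hiIn, hzB'⟩)]
        · rw [if_pos hiIn, Set.indicator_of_notMem hzB', mul_zero,
            if_neg (show i ∉ E j from fun h => hzB' h.2)]
      · rw [if_neg hiIn, if_neg (show i ∉ E j from fun h => hiIn h.1)]
    have hdisj : ∀ j ∈ J, ∀ j' ∈ J, j ≠ j' → ∀ i, i ∈ E j → i ∈ E j' → False := by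
      intro j hj j' hj' hne i hij hij'
      obtain ⟨k, hk, hd⟩ := hJpair hj hj' hne
      have d1 : dist (T^[k] (x j)) (T^[k] (z j)) < r := hzB j hj k hk
      have d2 : dist (T^[k] (x i)) (T^[k] (z j)) < r := hij.2 k hk
      have d3 : dist (T^[k] (x i)) (T^[k] (z j')) < r := hij'.2 k hk
      have d4 : dist (T^[k] (x j')) (T^[k] (z j')) < r := hzB j' hj' k hk
      have t1 := dist_triangle4 (T^[k] (x j)) (T^[k] (z j)) (T^[k] (x i)) (T^[k] (x j'))
      have t2 := dist_triangle (T^[k] (x i)) (T^[k] (z j')) (T^[k] (x j'))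
      have e1 : dist (T^[k] (z j)) (T^[k] (x i)) = dist (T^[k] (x i)) (T^[k] (z j)) := dist_comm _ _
      have e2 : dist (T^[k] (z j')) (T^[k] (x j')) = dist (T^[k] (x j')) (T^[k] (z j')) :=
        dist_comm _ _
      linarith
    calc (∑' j : ℕ, J.indicator (fun _ => τ) j)
        = ∑' j : ℕ, (if j ∈ J then τ else 0) :=
          tsum_congr fun j => Set.indicator_apply _ _ _
      _ ≤ ∑' j : ℕ, (if j ∈ J then ∑' i : ℕ, (if i ∈ E j then c i else 0) else 0) := by
          refine ENNReal.tsum_le_tsum fun j => ?_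
          by_cases hj : j ∈ J
          · simpa [hj] using hτE j hj
          · simp [hj]
      _ = ∑' (j : ℕ) (i : ℕ), (if j ∈ J ∧ i ∈ E j then c i else 0) := by
          refine tsum_congr fun j => ?_
          by_cases hj : j ∈ J <;> simp [hj]
      _ = ∑' (i : ℕ) (j : ℕ), (if j ∈ J ∧ i ∈ E j then c i else 0) := ENNReal.tsum_comm
      _ ≤ ∑' i : ℕ, (if i ∈ In then c i else 0) := by
          refine ENNReal.tsum_le_tsum fun i => ?_
          by_cases hex : ∃ j₀, j₀ ∈ J ∧ i ∈ E j₀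
          · obtain ⟨j₀, hj₀, hij₀⟩ := hex
            rw [tsum_eq_single j₀ ?_]
            · rw [if_pos ⟨hj₀, hij₀⟩, if_pos hij₀.1]
            · intro j hne
              by_cases hj : j ∈ J ∧ i ∈ E j
              · exact absurd (hdisj j hj.1 j₀ hj₀ hne i hj.2 hij₀) (fun h => h)
              · simp [hj]
          · push_neg at hex
            have hall : ∀ j, (if j ∈ J ∧ i ∈ E j then c i else 0) = 0 := by
              intro j
              by_cases hj : j ∈ J ∧ i ∈ E j
              · exact absurd hj.2 (hex j hj.1)
              · simp [hj]
            rw [ENNReal.tsum_eq_zero.2 hall]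
            exact zero_le
      _ = ∑' i : ℕ, In.indicator c i :=
          tsum_congr fun i => (Set.indicator_apply _ _ _).symm


set_option maxHeartbeats 1000000 in
/-- For all sufficiently large `N`:
`M_{N,ε/2}^{s+θ}(Z) ≤ W_{N,ε}^s(Z) ≤ M_{N,ε}^s(Z)`. -/
theorem MN_le_WN_le_MN {X : Type*} [MetricSpace X] [CompactSpace X]
    (T : X → X) (hT : Continuous T) (Z : Set X) (hZ : Z.Nonempty)
    (ε s θ : ℝ) (hε : 0 < ε) (hs : 0 < s) (hθ : 0 < θ) :
    ∀ᶠ N : ℕ in atTop,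
      MN dist T (ε / 2) N (s + θ) Z ≤ WN dist T ε N s Z ∧
      WN dist T ε N s Z ≤ MN dist T ε N s Z := by
  classical
  have hXne : Nonempty X := ⟨hZ.some⟩
  set q : ℝ := Real.exp (-(θ / 4)) with hqdef
  have hq0 : 0 < q := Real.exp_pos _
  have hq1 : q < 1 := Real.exp_lt_one_iff.2 (by linarith)
  have hA : ∀ᶠ N : ℕ in atTop, (5 : ℝ) ≤ Real.exp ((N : ℝ) * (ε / 2)) := by
    filter_upwards [tendsto_natCast_atTop_atTop.eventually_ge_atTop (8 / ε)] with N hN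
    have h1 : (4 : ℝ) ≤ (N : ℝ) * (ε / 2) := by
      have : (8 / ε) * (ε / 2) ≤ (N : ℝ) * (ε / 2) :=
        mul_le_mul_of_nonneg_right hN (by linarith)
      have h2 : (8 / ε) * (ε / 2) = 4 := by field_simp; ring
      linarith
    have := Real.add_one_le_exp ((N : ℝ) * (ε / 2))
    linarith
  have hB : ∀ᶠ N : ℕ in atTop, q ^ N < 1 - q := by
    have h2 : Filter.Tendsto (fun N : ℕ => q ^ N) atTop (nhds 0) :=
      tendsto_pow_atTop_nhds_zero_of_lt_one hq0.le hq1
    exact h2.eventually_lt_const (by linarith)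
  filter_upwards [hA, hB] with N hN5 hNq
  constructor
  · -- `MN (ε/2) (s+θ) ≤ WN ε s`
    unfold WN
    refine le_iInf fun S => le_iInf fun x => le_iInf fun m => le_iInf fun c =>
      le_iInf fun hc => le_iInf fun hcov => ?_
    set τ : ℕ → ℝ≥0∞ := fun n => ENNReal.ofReal (q ^ n) with hτdef
    have hτne : ∀ n, τ n ≠ 0 := by
      intro n
      simp only [hτdef, ne_eq, ENNReal.ofReal_eq_zero, not_le]
      exact pow_pos hq0 n
    set w : ℕ → X → ℝ≥0∞ := fun n y => ∑' i : ℕ,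
        ({i | i ∈ S ∧ m i = n}).indicator (fun i =>
          c i * (bowenBall dist T n (x i) (nrad ε n)).indicator (fun _ => (1 : ℝ≥0∞)) y) i
      with hwdef
    -- every point of Z has substantial weight at some level n
    have hZcover : ∀ y ∈ Z, ∃ n, τ n ≤ w n y := by
      intro y hy
      by_contra hcon
      push_neg at hcon
      have h1 : (1 : ℝ≥0∞) ≤ ∑' n, w n y := by
        refine le_trans (hcov y hy) (le_of_eq ?_)
        rw [tsum_subtype S (fun i => c i *
          (bowenBall dist T (m i) (x i) (nrad ε (m i))).indicator (fun _ => (1 : ℝ≥0∞)) y)]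
        rw [← fiber_tsum S m
          (fun i => c i *
            (bowenBall dist T (m i) (x i) (nrad ε (m i))).indicator (fun _ => (1 : ℝ≥0∞)) y)]
        refine (tsum_congr fun n => tsum_congr fun i => ?_)
        by_cases h : i ∈ {i | i ∈ S ∧ m i = n}
        · rw [Set.indicator_of_mem h, Set.indicator_of_mem h,
            (show m i = n from h.2)]
        · rw [Set.indicator_of_notMem h, Set.indicator_of_notMem h]
      have h2 : ∑' n, w n y ≤ ∑' n : ℕ, (if N ≤ n then τ n else 0) := by
        refine ENNReal.tsum_le_tsum fun n => ?_
        by_cases hn : N ≤ n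
        · rw [if_pos hn]
          exact (hcon n).le
        · rw [if_neg hn]
          have hz : ∀ i : ℕ, ({i | i ∈ S ∧ m i = n}).indicator (fun i =>
              c i * (bowenBall dist T n (x i) (nrad ε n)).indicator (fun _ => (1 : ℝ≥0∞)) y) i
              = 0 := by
            intro i
            refine Set.indicator_of_notMem (fun h => ?_) _
            exact hn ((show m i = n from h.2) ▸ (hc i h.1).2.2)
          exact le_of_eq (ENNReal.tsum_eq_zero.2 hz)
      have h3 : ∑' n : ℕ, (if N ≤ n then τ n else 0) < 1 := by
        have hshift : ∑' n : ℕ, (if N ≤ n then τ n else 0)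
            = ∑' k : ℕ, (if N ≤ k + N then τ (k + N) else 0) := by
          refine (Function.Injective.tsum_eq (g := fun k : ℕ => k + N)
            (fun a b h => by simp only [] at h; omega) ?_).symm
          intro n hn
          by_cases h : N ≤ n
          · exact ⟨n - N, by simp only []; omega⟩
          · rw [Function.mem_support, if_neg h] at hn
            exact absurd rfl hn
        have htail : ∑' n : ℕ, (if N ≤ n + N then τ (n + N) else 0)
            = (ENNReal.ofReal q) ^ N * ∑' n : ℕ, (ENNReal.ofReal q) ^ n := by
          rw [← ENNReal.tsum_mul_left]
          refine tsum_congr fun n => ?_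
          rw [if_pos (Nat.le_add_left N n)]
          simp only [hτdef]
          rw [pow_add, ← ENNReal.ofReal_pow hq0.le, ← ENNReal.ofReal_pow hq0.le,
            ← ENNReal.ofReal_mul (pow_nonneg hq0.le _), mul_comm]
        have hgeom : ∑' n : ℕ, (ENNReal.ofReal q) ^ n = (1 - ENNReal.ofReal q)⁻¹ :=
          ENNReal.tsum_geometric _
        have h1q0 : (1 - ENNReal.ofReal q) ≠ 0 := by
          rw [ne_eq, tsub_eq_zero_iff_le, not_le]
          exact ENNReal.ofReal_lt_one.2 hq1
        have h1qtop : (1 - ENNReal.ofReal q) ≠ ∞ :=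
          ne_top_of_le_ne_top ENNReal.one_ne_top tsub_le_self
        have hlt : (ENNReal.ofReal q) ^ N < 1 - ENNReal.ofReal q := by
          rw [← ENNReal.ofReal_pow hq0.le, ← ENNReal.ofReal_one,
            ← ENNReal.ofReal_sub 1 hq0.le]
          exact (ENNReal.ofReal_lt_ofReal_iff (by linarith)).2 hNq
        calc ∑' n : ℕ, (if N ≤ n then τ n else 0)
            = ∑' n : ℕ, (if N ≤ n + N then τ (n + N) else 0) := hshift
          _ = (ENNReal.ofReal q) ^ N * (1 - ENNReal.ofReal q)⁻¹ := by rw [htail, hgeom]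
          _ < (1 - ENNReal.ofReal q) * (1 - ENNReal.ofReal q)⁻¹ := by
              rw [mul_comm _ (1 - ENNReal.ofReal q)⁻¹, mul_comm (1 - ENNReal.ofReal q)]
              refine ENNReal.mul_lt_mul_right ?_ ?_ hlt
              · exact ENNReal.inv_ne_zero.2 h1qtop
              · exact ENNReal.inv_ne_top.2 h1q0
          _ = 1 := ENNReal.mul_inv_cancel h1q0 h1qtop
      exact absurd (h1.trans h2) (not_le.2 h3)
    -- selection at each level n
    have hsel : ∀ n : ℕ, ∃ J : Set ℕ, (∀ j ∈ J, j ∈ S ∧ m j = n) ∧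
        (∀ y, y ∈ Z → τ n ≤ w n y → ∃ j ∈ J, ∀ k < n,
          dist (T^[k] (x j)) (T^[k] y) < 5 * nrad ε n) ∧
        (∑' j : ℕ, J.indicator (fun _ => τ n) j)
          ≤ ∑' i : ℕ, ({i | i ∈ S ∧ m i = n}).indicator c i := by
      intro n
      obtain ⟨J, h1, h2, h3⟩ := bowen_selection T n (nrad ε n) (Real.exp_pos _) x c
        {i | i ∈ S ∧ m i = n} {y | y ∈ Z ∧ τ n ≤ w n y} (τ n) (hτne n)
        (fun y hy => hy.2)
      exact ⟨J, fun j hj => h1 hj, fun y hyZ hyw => h2 y ⟨hyZ, hyw⟩, h3⟩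
    choose Jn hJinfo hJcov hJcount using hsel
    set C : Set (X × ℕ) := {p | ∃ n j, j ∈ Jn n ∧ p = (x j, n)} with hCdef
    have hCc : C.Countable := by
      refine Set.Countable.mono ?_
        (Set.countable_range (fun nj : ℕ × ℕ => ((x nj.2, nj.1) : X × ℕ)))
      rintro p ⟨n, j, hj, rfl⟩
      exact ⟨(n, j), rfl⟩
    have hCN : ∀ p ∈ C, N ≤ p.2 := by
      rintro p ⟨n, j, hj, rfl⟩
      have h1 := hJinfo n j hj
      exact h1.2 ▸ (hc j h1.1).2.2
    have hCcov : Z ⊆ ⋃ p ∈ C, bowenBall dist T p.2 p.1 (nrad (ε / 2) p.2) := by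
      intro y hy
      obtain ⟨n, hyn⟩ := hZcover y hy
      obtain ⟨j, hjJ, hj5⟩ := hJcov n y hy hyn
      have hnN : N ≤ n := by
        have h1 := hJinfo n j hjJ
        exact h1.2 ▸ (hc j h1.1).2.2
      refine Set.mem_biUnion (show ((x j, n) : X × ℕ) ∈ C from ⟨n, j, hjJ, rfl⟩) ?_
      intro k hk
      refine (hj5 k hk).trans_le ?_
      show 5 * nrad ε n ≤ nrad (ε / 2) n
      have e1 : Real.exp (-(n : ℝ) * (ε / 2))
          = Real.exp ((n : ℝ) * (ε / 2)) * Real.exp (-(n : ℝ) * ε) := by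
        rw [← Real.exp_add]; ring_nf
      rw [nrad, nrad, e1]
      have h6 : (5 : ℝ) ≤ Real.exp ((n : ℝ) * (ε / 2)) := by
        refine hN5.trans (Real.exp_le_exp.2 ?_)
        exact mul_le_mul_of_nonneg_right (Nat.cast_le.2 hnN) (by linarith)
      exact mul_le_mul_of_nonneg_right h6 (Real.exp_pos _).le
    have hMN : MN dist T (ε / 2) N (s + θ) Z
        ≤ ∑' p : C, ENNReal.ofReal (Real.exp (-(p.1.2 : ℝ) * (s + θ))) := by
      unfold MN
      exact iInf_le_of_le C (iInf_le_of_le hCc (iInf_le_of_le hCN (iInf_le_of_le hCcov le_rfl)))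
    refine hMN.trans ?_
    -- cost estimate
    have hψex : ∀ p : C, ∃ nj : ℕ × ℕ, nj.2 ∈ Jn nj.1 ∧ (p : X × ℕ) = (x nj.2, nj.1) := by
      rintro ⟨p, n, j, hj, rfl⟩
      exact ⟨(n, j), hj, rfl⟩
    choose ψ hψJ hψeq using hψex
    have hψinj : Function.Injective ψ := by
      intro p p' h
      apply Subtype.ext
      rw [hψeq p, hψeq p', h]
    set g : ℕ × ℕ → ℝ≥0∞ := fun nj =>
      (Jn nj.1).indicator (fun _ => ENNReal.ofReal (Real.exp (-(nj.1 : ℝ) * (s + θ)))) nj.2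
      with hgdef
    calc (∑' p : C, ENNReal.ofReal (Real.exp (-((p : X × ℕ).2 : ℝ) * (s + θ))))
        = ∑' p : C, g (ψ p) := by
          refine tsum_congr fun p => ?_
          have h3 : ((p : X × ℕ)).2 = (ψ p).1 := by rw [hψeq p]
          rw [h3, hgdef]
          simp only []
          rw [Set.indicator_of_mem (hψJ p)]
      _ ≤ ∑' nj : ℕ × ℕ, g nj := tsum_comp_le_tsum_of_injective hψinj g
      _ = ∑' (n : ℕ) (j : ℕ),
            (Jn n).indicator (fun _ => ENNReal.ofReal (Real.exp (-(n : ℝ) * (s + θ)))) j := by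
          rw [ENNReal.tsum_prod']
      _ ≤ ∑' n : ℕ, ENNReal.ofReal (Real.exp (-(n : ℝ) * s))
            * ∑' i : ℕ, ({i | i ∈ S ∧ m i = n}).indicator c i := by
          refine ENNReal.tsum_le_tsum fun n => ?_
          have key : ∀ j : ℕ,
              (Jn n).indicator (fun _ => ENNReal.ofReal (Real.exp (-(n : ℝ) * (s + θ)))) j
              = ENNReal.ofReal (Real.exp (-(n : ℝ) * (s + 3 * θ / 4)))
                * (Jn n).indicator (fun _ => τ n) j := by
            intro j
            by_cases hj : j ∈ Jn n
            · rw [Set.indicator_of_mem hj, Set.indicator_of_mem hj]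
              simp only [hτdef]
              rw [show q ^ n = Real.exp ((n : ℝ) * (-(θ / 4))) from (Real.exp_nat_mul _ n).symm,
                ← ENNReal.ofReal_mul (Real.exp_nonneg _), ← Real.exp_add]
              exact congrArg _ (congrArg Real.exp (by ring))
            · rw [Set.indicator_of_notMem hj, Set.indicator_of_notMem hj, mul_zero]
          rw [tsum_congr key, ENNReal.tsum_mul_left]
          calc ENNReal.ofReal (Real.exp (-(n : ℝ) * (s + 3 * θ / 4)))
                * ∑' j : ℕ, (Jn n).indicator (fun _ => τ n) j
              ≤ ENNReal.ofReal (Real.exp (-(n : ℝ) * (s + 3 * θ / 4)))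
                * ∑' i : ℕ, ({i | i ∈ S ∧ m i = n}).indicator c i :=
                mul_le_mul_right (hJcount n) _
            _ ≤ ENNReal.ofReal (Real.exp (-(n : ℝ) * s))
                * ∑' i : ℕ, ({i | i ∈ S ∧ m i = n}).indicator c i := by
                refine mul_le_mul_left (ENNReal.ofReal_le_ofReal
                  (Real.exp_le_exp.2 ?_)) _
                have hn0 : (0 : ℝ) ≤ (n : ℝ) := Nat.cast_nonneg n
                nlinarith
      _ = ∑' (n : ℕ) (i : ℕ),
            ({i | i ∈ S ∧ m i = n}).indicator
              (fun i => c i * ENNReal.ofReal (Real.exp (-(m i : ℝ) * s))) i := by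
          refine tsum_congr fun n => ?_
          rw [← ENNReal.tsum_mul_left]
          refine tsum_congr fun i => ?_
          by_cases h : i ∈ {i | i ∈ S ∧ m i = n}
          · rw [Set.indicator_of_mem h, Set.indicator_of_mem h,
              (show m i = n from h.2), mul_comm]
          · rw [Set.indicator_of_notMem h, Set.indicator_of_notMem h, mul_zero]
      _ = ∑' i : ℕ, S.indicator (fun i => c i * ENNReal.ofReal (Real.exp (-(m i : ℝ) * s))) i :=
          fiber_tsum S m _
      _ = ∑' i : S, c i.1 * ENNReal.ofReal (Real.exp (-(m i.1 : ℝ) * s)) := by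
          rw [tsum_subtype S (fun i => c i * ENNReal.ofReal (Real.exp (-(m i : ℝ) * s)))]
  · -- `WN ε s ≤ MN ε s`
    unfold MN
    refine le_iInf fun C => le_iInf fun hCc => le_iInf fun hCN => le_iInf fun hCcov => ?_
    obtain ⟨e, he⟩ := Set.countable_iff_exists_injective.1 hCc
    obtain ⟨y0, hy0⟩ := hZ
    have hy0' := hCcov hy0
    rw [Set.mem_iUnion₂] at hy0'
    obtain ⟨p₀, hp₀, -⟩ := hy0'
    set pick : ℕ → X × ℕ := fun i =>
      if h : ∃ p : C, e p = i then ((h.choose : C) : X × ℕ) else p₀ with hpickdef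
    have hpickC : ∀ i, pick i ∈ C := by
      intro i
      by_cases h : ∃ p : C, e p = i
      · have h1 : pick i = ((h.choose : C) : X × ℕ) := by rw [hpickdef]; exact dif_pos h
        rw [h1]; exact (h.choose).2
      · have h1 : pick i = p₀ := by rw [hpickdef]; exact dif_neg h
        rw [h1]; exact hp₀
    have hpick_e : ∀ p : C, pick (e p) = (p : X × ℕ) := by
      intro p
      have h : ∃ p' : C, e p' = e p := ⟨p, rfl⟩
      have h1 : pick (e p) = ((h.choose : C) : X × ℕ) := by rw [hpickdef]; exact dif_pos h
      rw [h1]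
      exact congrArg _ (he h.choose_spec)
    unfold WN
    refine iInf_le_of_le (Set.range e) (iInf_le_of_le (fun i => (pick i).1)
      (iInf_le_of_le (fun i => (pick i).2) (iInf_le_of_le (fun _ => 1)
      (iInf_le_of_le ?_ (iInf_le_of_le ?_ ?_)))))
    · intro i _
      refine ⟨zero_lt_one, ENNReal.one_lt_top, ?_⟩
      exact hCN _ (hpickC i)
    · intro y hy
      have hy' := hCcov hy
      rw [Set.mem_iUnion₂] at hy'
      obtain ⟨p, hpC, hyB⟩ := hy'
      have hmem : e ⟨p, hpC⟩ ∈ Set.range e := ⟨⟨p, hpC⟩, rfl⟩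
      have hpe := hpick_e ⟨p, hpC⟩
      have h1 : (pick (e ⟨p, hpC⟩)).1 = p.1 := by rw [hpe]
      have h2 : (pick (e ⟨p, hpC⟩)).2 = p.2 := by rw [hpe]
      refine le_trans (le_of_eq ?_) (ENNReal.le_tsum (⟨e ⟨p, hpC⟩, hmem⟩ : Set.range e))
      simp only []
      rw [h1, h2, Set.indicator_of_mem hyB, mul_one]
    · -- cost comparison
      set ψ : Set.range e → C := fun i => ⟨pick i.1, hpickC i.1⟩ with hψdef
      have hψinj : Function.Injective ψ := by
        intro a b h
        have h1 : pick a.1 = pick b.1 := congrArg Subtype.val h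
        obtain ⟨pa, hpa⟩ := a.2
        obtain ⟨pb, hpb⟩ := b.2
        have h2 : (pa : X × ℕ) = (pb : X × ℕ) := by
          rw [← hpick_e pa, ← hpick_e pb, hpa, hpb]; exact h1
        apply Subtype.ext
        rw [← hpa, ← hpb, Subtype.ext h2]
      have := tsum_comp_le_tsum_of_injective hψinj
        (fun p : C => ENNReal.ofReal (Real.exp (-((p : X × ℕ).2 : ℝ) * s)))
      refine le_trans (le_of_eq (tsum_congr fun i => ?_)) this
      rw [one_mul]
  done
end

section
/- Let (X,d) be a compact metric space, T : X → X continuous, and Z a non-empty subset of X. Then the neutralized Bowen topological entropy equals the neutralized weighted Bowen topological entropy: h_top^{B̃}(T,Z) = h_top^{W̃B}(T,Z). -/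
open Filter Set MeasureTheory ENNReal NNReal Topology

variable {X : Type*}

/-- `W_ε^s(Z) = lim_{N→∞} W_{N,ε}^s(Z)`. -/
noncomputable def Wlim (d : X → X → ℝ) (T : X → X) (ε s : ℝ) (Z : Set X) : ℝ≥0∞ :=
  ⨆ N : ℕ, WN d T ε N s Z

/-- The critical value `W_ε(Z) = inf {s ≥ 0 : W_ε^s(Z) = 0}`. -/
noncomputable def Wcrit (d : X → X → ℝ) (T : X → X) (ε : ℝ) (Z : Set X) : ℝ≥0∞ :=
  ⨅ (s : ℝ≥0) (_ : Wlim d T ε (s : ℝ) Z = 0), (s : ℝ≥0∞)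

/-- The neutralized weighted Bowen topological entropy `h_top^{W̃B}(T,Z) = lim_{ε→0} W_ε(Z)`. -/
noncomputable def htopWB (d : X → X → ℝ) (T : X → X) (Z : Set X) : ℝ≥0∞ :=
  ⨅ (ε : ℝ) (_ : 0 < ε), Wcrit d T ε Z

set_option maxHeartbeats 1000000
section Helpers

lemma bowen_symm [MetricSpace X] {T : X → X} {n : ℕ} {r : ℝ} {y z : X} :
    z ∈ bowenBall dist T n y r ↔ y ∈ bowenBall dist T n z r := by
  simp only [bowenBall, mem_setOf_eq]
  constructor <;> exact fun h j hj => by rw [dist_comm]; exact h j hj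

lemma bowen_mono [MetricSpace X] {T : X → X} {n : ℕ} {r r' : ℝ} (h : r ≤ r') (x : X) :
    bowenBall dist T n x r ⊆ bowenBall dist T n x r' :=
  fun y hy j hj => lt_of_lt_of_le (hy j hj) h

lemma bowen_triangle [MetricSpace X] {T : X → X} {n : ℕ} {r : ℝ} {x y z : X}
    (hy : y ∈ bowenBall dist T n x r) (hz : z ∈ bowenBall dist T n x r) :
    z ∈ bowenBall dist T n y (2 * r) := fun j hj =>
  calc dist (T^[j] y) (T^[j] z) ≤ dist (T^[j] y) (T^[j] x) + dist (T^[j] x) (T^[j] z) :=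
        dist_triangle _ _ _
    _ < r + r := by
        rw [dist_comm]
        exact add_lt_add (hy j hj) (hz j hj)
    _ = 2 * r := by ring

lemma tsum_fiber {ι : Type*} (m : ι → ℕ) (g : ι → ℝ≥0∞) :
    ∑' i, g i = ∑' (n : ℕ) (j : {i : ι // m i = n}), g j.1 := by
  rw [← (Equiv.sigmaFiberEquiv m).tsum_eq g]
  exact ENNReal.tsum_sigma' _

lemma cover_lemma [MetricSpace X] (T : X → X) (n : ℕ) {r : ℝ} (hr : 0 < r)
    {ι : Type*} (x : ι → X) (c : ι → ℝ≥0∞) {t : ℝ≥0∞} (ht : t ≠ 0)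
    (hc : ∑' i, c i ≠ ∞) :
    ∃ J : Set X, J.Countable ∧
      ({y : X | t < ∑' i, c i * (bowenBall dist T n (x i) r).indicator (fun _ => (1:ℝ≥0∞)) y}
        ⊆ ⋃ y ∈ J, bowenBall dist T n y (2*r)) ∧
      (∑' _ : J, t) ≤ ∑' i, c i := by
  set Zt := {y : X | t < ∑' i, c i * (bowenBall dist T n (x i) r).indicator (fun _ => (1:ℝ≥0∞)) y}
    with hZt
  set R : X → X → Prop := fun y z => z ∉ bowenBall dist T n y (2*r) with hR
  have hRsymm : Symmetric R := fun y z h hz => h (bowen_symm.mp hz)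
  obtain ⟨J, hJmax⟩ := zorn_subset {J : Set X | J ⊆ Zt ∧ J.Pairwise R} (by
    intro ch hch hchain
    refine ⟨⋃₀ ch, ⟨fun y hy => ?_, fun y hy z hz hne => ?_⟩, fun s hs => subset_sUnion_of_mem hs⟩
    · obtain ⟨A, hA, hyA⟩ := hy
      exact (hch hA).1 hyA
    · obtain ⟨A, hA, hyA⟩ := hy
      obtain ⟨B, hB, hzB⟩ := hz
      rcases hchain.total hA hB with hAB | hBA
      · exact (hch hB).2 (hAB hyA) hzB hne
      · exact (hch hA).2 hyA (hBA hzB) hne)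
  obtain ⟨⟨hJZt, hJpw⟩, hmax⟩ := hJmax
  -- the covering property
  have hcov : Zt ⊆ ⋃ y ∈ J, bowenBall dist T n y (2*r) := by
    intro z hz
    by_contra hnot
    simp only [mem_iUnion, not_exists] at hnot
    have hins : insert z J ∈ {J : Set X | J ⊆ Zt ∧ J.Pairwise R} := by
      refine ⟨insert_subset hz hJZt, (show (insert z J).Pairwise R ↔ J.Pairwise R ∧ ∀ b ∈ J, z ≠ b → R z b by haveI : Std.Symm R := ⟨fun a b h => hRsymm h⟩; exact pairwise_insert_of_symmetric).2 ⟨hJpw, ?_⟩⟩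
      intro b hb _
      exact fun hzb => hnot b hb (bowen_symm.mp hzb)
    have : insert z J ⊆ J := hmax hins (subset_insert _ _)
    have hzJ : z ∈ J := this (mem_insert _ _)
    refine hnot z hzJ ?_
    intro j _
    simp only [Function.iterate_fixed, dist_self]
    positivity
  -- weight bound
  have hwt : (∑' _ : J, t) ≤ ∑' i, c i := by
    have step1 : (∑' _ : J, t) ≤ ∑' (y : J) (i : ι),
        c i * (bowenBall dist T n (x i) r).indicator (fun _ => (1:ℝ≥0∞)) y.1 :=
      ENNReal.tsum_le_tsum fun y => (hJZt y.2).le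
    have step2 : ∀ i : ι, (∑' y : J,
        c i * (bowenBall dist T n (x i) r).indicator (fun _ => (1:ℝ≥0∞)) y.1) ≤ c i := by
      intro i
      by_cases h : ∃ y : J, y.1 ∈ bowenBall dist T n (x i) r
      · obtain ⟨y₀, hy₀⟩ := h
        have huniq : ∀ y : J, y ≠ y₀ →
            c i * (bowenBall dist T n (x i) r).indicator (fun _ => (1:ℝ≥0∞)) y.1 = 0 := by
          intro y hne
          have hvals : y.1 ≠ y₀.1 := fun h' => hne (Subtype.ext h')
          by_cases hy : y.1 ∈ bowenBall dist T n (x i) r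
          · exact absurd (bowen_triangle hy₀ hy) (hJpw y₀.2 y.2 hvals.symm)
          · simp [Set.indicator_of_notMem hy]
        rw [tsum_eq_single y₀ huniq]
        by_cases hy : y₀.1 ∈ bowenBall dist T n (x i) r
        · simp [Set.indicator_of_mem hy]
        · simp [Set.indicator_of_notMem hy]
      · push_neg at h
        have : ∀ y : J,
            c i * (bowenBall dist T n (x i) r).indicator (fun _ => (1:ℝ≥0∞)) y.1 = 0 := by
          intro y; simp [Set.indicator_of_notMem (h y)]
        simp [this]
    calc (∑' _ : J, t) ≤ _ := step1
      _ = ∑' (i : ι) (y : J),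
          c i * (bowenBall dist T n (x i) r).indicator (fun _ => (1:ℝ≥0∞)) y.1 :=
        ENNReal.tsum_comm
      _ ≤ ∑' i, c i := ENNReal.tsum_le_tsum step2
  refine ⟨J, ?_, hcov, hwt⟩
  by_contra hJc
  have : J.Infinite := fun hfin => hJc hfin.countable
  have : Infinite J := Set.infinite_coe_iff.mpr this
  rw [ENNReal.tsum_const_eq_top_of_ne_zero ht] at hwt
  exact hc (top_le_iff.mp hwt)


lemma MN_mono [MetricSpace X] (T : X → X) (ε s : ℝ) (Z : Set X) {N N' : ℕ} (h : N ≤ N') :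
    MN dist T ε N s Z ≤ MN dist T ε N' s Z := by
  refine le_iInf fun C => le_iInf fun hC => le_iInf fun hN => le_iInf fun hcov => ?_
  exact iInf_le_of_le C <| iInf_le_of_le hC <|
    iInf_le_of_le (fun p hp => h.trans (hN p hp)) <| iInf_le_of_le hcov le_rfl

lemma WN_le_MN [MetricSpace X] (T : X → X) (ε s : ℝ) (N : ℕ) (Z : Set X) (hZ : Z.Nonempty) :
    WN dist T ε N s Z ≤ MN dist T ε N s Z := by
  refine le_iInf fun C => le_iInf fun hC => le_iInf fun hN => le_iInf fun hcov => ?_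
  obtain ⟨z, hz⟩ := hZ
  have hzC := hcov hz
  simp only [mem_iUnion] at hzC
  obtain ⟨p₀, hp₀, -⟩ := hzC
  haveI : Nonempty C := ⟨⟨p₀, hp₀⟩⟩
  obtain ⟨f, hf⟩ := Set.countable_iff_exists_injective.mp hC
  set g : ℕ → C := Function.invFun f with hg
  have hgf : ∀ p : C, g (f p) = p := Function.leftInverse_invFun hf
  set S : Set ℕ := Set.range f with hS
  set xf : ℕ → X := fun i => (g i).1.1 with hxf
  set mf : ℕ → ℕ := fun i => (g i).1.2 with hmf
  have key : WN dist T ε N s Z ≤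
      ∑' i : S, (1:ℝ≥0∞) * ENNReal.ofReal (Real.exp (-(mf i.1 : ℝ) * s)) := by
    refine iInf_le_of_le S <| iInf_le_of_le xf <| iInf_le_of_le mf <|
      iInf_le_of_le (fun _ => 1) <| iInf_le_of_le ?_ <| iInf_le_of_le ?_ le_rfl
    · intro i _
      exact ⟨zero_lt_one, one_lt_top, hN _ (g i).2⟩
    · intro y hy
      have hyC := hcov hy
      simp only [mem_iUnion] at hyC
      obtain ⟨p, hp, hyp⟩ := hyC
      set i : ℕ := f ⟨p, hp⟩ with hi
      have hiS : i ∈ S := ⟨⟨p, hp⟩, rfl⟩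
      have hgi : g i = ⟨p, hp⟩ := hgf _
      have hterm : (1:ℝ≥0∞) *
          (bowenBall dist T (mf i) (xf i) (nrad ε (mf i))).indicator (fun _ => (1 : ℝ≥0∞)) y
          = 1 := by
        show (1:ℝ≥0∞) * (bowenBall dist T (g i).1.2 (g i).1.1
            (nrad ε (g i).1.2)).indicator (fun _ => (1 : ℝ≥0∞)) y = 1
        rw [hgi]
        simp [Set.indicator_of_mem hyp]
      calc (1:ℝ≥0∞) = _ := hterm.symm
        _ ≤ _ := ENNReal.le_tsum (⟨i, hiS⟩ : S)
  refine key.trans ?_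
  have := Equiv.tsum_eq (Equiv.ofInjective f hf)
    (fun i : S => (1:ℝ≥0∞) * ENNReal.ofReal (Real.exp (-(mf i.1 : ℝ) * s)))
  rw [← this]
  refine le_of_eq (tsum_congr fun p => ?_)
  have : mf (f p) = p.1.2 := by simp only [hmf, hgf]
  simp [Equiv.ofInjective, this]

lemma Mlim_zero [MetricSpace X] (T : X → X) (Z : Set X) {ε : ℝ} (hε : 0 < ε)
    (s δ : ℝ≥0) (hδ : 0 < δ)
    (hW : ∀ N : ℕ, WN dist T ε N (s : ℝ) Z = 0) :
    (⨆ N : ℕ, MN dist T (ε/2) N ((s:ℝ) + 2*(δ:ℝ)) Z) = 0 := by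
  set s' : ℝ := (s:ℝ) + 2*(δ:ℝ) with hs'
  rw [ENNReal.iSup_eq_zero]
  intro N
  -- the geometric weights
  set q : ℝ≥0∞ := ENNReal.ofReal (Real.exp (-(δ:ℝ))) with hqdef
  have hqlt1 : q < 1 := ENNReal.ofReal_lt_one.mpr (Real.exp_lt_one_iff.mpr (neg_lt_zero.mpr (by exact_mod_cast hδ)))
  have hq0 : q ≠ 0 := (ENNReal.ofReal_pos.mpr (Real.exp_pos _)).ne'
  have hqtop : q ≠ ∞ := ENNReal.ofReal_ne_top
  have h1q0 : 1 - q ≠ 0 := (tsub_pos_of_lt hqlt1).ne'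
  have h1qtop : 1 - q ≠ ∞ := (tsub_le_self.trans_lt one_lt_top).ne
  set t : ℕ → ℝ≥0∞ := fun n => (1 - q) * q ^ n with htdef
  have ht0 : ∀ n, t n ≠ 0 := fun n => mul_ne_zero h1q0 (pow_ne_zero n hq0)
  have httop : ∀ n, t n ≠ ∞ := fun n => ENNReal.mul_ne_top h1qtop (ENNReal.pow_ne_top hqtop)
  have htsum : ∑' n, t n = 1 := by
    rw [htdef]
    rw [ENNReal.tsum_mul_left, ENNReal.tsum_geometric, ENNReal.mul_inv_cancel h1q0 h1qtop]
  have hqpow : ∀ n : ℕ, q ^ n = ENNReal.ofReal (Real.exp (-(n:ℝ) * (δ:ℝ))) := by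
    intro n
    rw [hqdef, ← ENNReal.ofReal_pow (Real.exp_pos _).le, ← Real.exp_nat_mul]
    ring_nf
  -- the threshold for radii
  set N₀ : ℕ := ⌈2 * Real.log 2 / ε⌉₊ with hN₀def
  have hN₀ : ∀ n : ℕ, N₀ ≤ n → 2 * nrad ε n ≤ nrad (ε/2) n := by
    intro n hn
    have hx : 2 * Real.log 2 / ε ≤ (n : ℝ) := (Nat.le_ceil _).trans (Nat.cast_le.mpr hn)
    have hlog : Real.log 2 ≤ (n : ℝ) * ε / 2 := by
      rw [div_le_iff₀ hε] at hx; nlinarith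
    have h2le : (2:ℝ) ≤ Real.exp ((n:ℝ) * ε / 2) :=
      (Real.exp_log two_pos).symm.trans_le (Real.exp_le_exp.mpr hlog)
    have : 2 * Real.exp (-(n:ℝ) * ε) ≤ Real.exp ((n:ℝ) * ε / 2) * Real.exp (-(n:ℝ) * ε) :=
      mul_le_mul_of_nonneg_right h2le (Real.exp_pos _).le
    refine this.trans (le_of_eq ?_)
    rw [← Real.exp_add, nrad]
    congr 1
    ring
  set N' : ℕ := max (max N 1) N₀ with hN'def
  have hN'1 : 1 ≤ N' := le_max_of_le_left (le_max_right _ _)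
  have hNN' : N ≤ N' := le_max_of_le_left (le_max_left _ _)
  have hN₀N' : N₀ ≤ N' := le_max_right _ _
  have hmain : MN dist T (ε/2) N' s' Z = 0 := by
    refine le_antisymm (le_of_forall_gt_imp_ge_of_dense fun θ hθ => ?_) zero_le
    by_cases hθtop : θ = ∞
    · exact hθtop ▸ le_top
    set η : ℝ≥0∞ := (1 - q) * θ with hηdef
    have hη0 : η ≠ 0 := mul_ne_zero h1q0 hθ.ne'
    have hηtop : η ≠ ∞ := ENNReal.mul_ne_top h1qtop hθtop
    have hWlt : WN dist T ε N' (s:ℝ) Z < η := (hW N').trans_lt (pos_iff_ne_zero.mpr hη0)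
    rw [WN] at hWlt
    simp only [iInf_lt_iff] at hWlt
    obtain ⟨S, x, m, c, h1, h2, hsum⟩ := hWlt
    have hdec : ∀ G : ↥S → ℝ≥0∞,
        ∑' i, G i = ∑' (n : ℕ) (j : {i : ↥S // m i.1 = n}), G j.1 :=
      fun G => tsum_fiber (fun i : ↥S => m i.1) G
    have hfibempty : ∀ n : ℕ, n < N' → IsEmpty {i : ↥S // m i.1 = n} := by
      intro n hn
      refine ⟨fun j => absurd ?_ (not_le.mpr hn)⟩
      exact j.2 ▸ (h1 j.1.1 j.1.2).2.2
    set fiberC : ℕ → ℝ≥0∞ := fun n => ∑' j : {i : ↥S // m i.1 = n}, c j.1.1 with hfibC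
    have hfibfin : ∀ n : ℕ, fiberC n ≠ ∞ := by
      intro n
      have e1 : (∑' j : {i : ↥S // m i.1 = n},
          c j.1.1 * ENNReal.ofReal (Real.exp (-(n:ℝ) * (s:ℝ))))
          * ENNReal.ofReal (Real.exp ((n:ℝ) * (s:ℝ))) = fiberC n := by
        rw [ENNReal.tsum_mul_right, mul_assoc, ← ENNReal.ofReal_mul (Real.exp_pos _).le,
          ← Real.exp_add, neg_mul, neg_add_cancel, Real.exp_zero, ENNReal.ofReal_one, mul_one]
      have hcongr : ∀ nn : ℕ, (∑' j : {i : ↥S // m i.1 = nn},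
          c j.1.1 * ENNReal.ofReal (Real.exp (-(m j.1.1 : ℝ) * (s:ℝ))))
          = ∑' j : {i : ↥S // m i.1 = nn},
            c j.1.1 * ENNReal.ofReal (Real.exp (-(nn:ℝ) * (s:ℝ))) :=
        fun nn => tsum_congr fun j => by rw [j.2]
      have e2 : (∑' j : {i : ↥S // m i.1 = n},
          c j.1.1 * ENNReal.ofReal (Real.exp (-(n:ℝ) * (s:ℝ)))) ≤ η := by
        calc (∑' j : {i : ↥S // m i.1 = n},
            c j.1.1 * ENNReal.ofReal (Real.exp (-(n:ℝ) * (s:ℝ))))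
            = ∑' j : {i : ↥S // m i.1 = n},
              c j.1.1 * ENNReal.ofReal (Real.exp (-(m j.1.1:ℝ) * (s:ℝ))) := (hcongr n).symm
          _ ≤ ∑' (nn : ℕ), ∑' j : {i : ↥S // m i.1 = nn},
              c j.1.1 * ENNReal.ofReal (Real.exp (-(m j.1.1:ℝ) * (s:ℝ))) := ENNReal.le_tsum n
          _ = ∑' i : ↥S, c i.1 * ENNReal.ofReal (Real.exp (-(m i.1:ℝ) * (s:ℝ))) :=
            (hdec (fun i : ↥S => c i.1 * ENNReal.ofReal (Real.exp (-(m i.1:ℝ) * (s:ℝ))))).symm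
          _ ≤ η := hsum.le
      rw [← e1]
      exact ENNReal.mul_ne_top (e2.trans_lt (lt_top_iff_ne_top.mpr hηtop)).ne
        ENNReal.ofReal_ne_top
    have hexist : ∀ n : ℕ, ∃ J : Set X, J.Countable ∧
        (N' ≤ n → ({y : X | t n < ∑' j : {i : ↥S // m i.1 = n},
              c j.1.1 * (bowenBall dist T n (x j.1.1) (nrad ε n)).indicator
                (fun _ => (1:ℝ≥0∞)) y}
            ⊆ ⋃ w ∈ J, bowenBall dist T n w (2 * nrad ε n)) ∧
          (∑' _ : J, t n) ≤ fiberC n) ∧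
        (¬ N' ≤ n → J = ∅) := by
      intro n
      by_cases h : N' ≤ n
      · obtain ⟨J, hJ1, hJ2, hJ3⟩ := cover_lemma T n
          (show (0:ℝ) < nrad ε n from Real.exp_pos _)
          (fun j : {i : ↥S // m i.1 = n} => x j.1.1) (fun j => c j.1.1) (ht0 n) (hfibfin n)
        exact ⟨J, hJ1, fun _ => ⟨hJ2, hJ3⟩, fun h' => absurd h h'⟩
      · exact ⟨∅, countable_empty, fun h' => absurd h' h, fun _ => rfl⟩
    choose J hJc hJcov hJemp using hexist
    set C : Set (X × ℕ) := ⋃ n : ℕ, (fun w => (w, n)) '' J n with hCdef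
    have hpig : ∀ y ∈ Z, ∃ n : ℕ, N' ≤ n ∧ t n < ∑' j : {i : ↥S // m i.1 = n},
        c j.1.1 * (bowenBall dist T n (x j.1.1) (nrad ε n)).indicator (fun _ => (1:ℝ≥0∞)) y := by
      intro y hy
      by_contra hnot
      push_neg at hnot
      set G : ↥S → ℝ≥0∞ := fun i =>
        c i.1 * (bowenBall dist T (m i.1) (x i.1) (nrad ε (m i.1))).indicator
          (fun _ => (1:ℝ≥0∞)) y with hGdef
      have h1le : (1:ℝ≥0∞) ≤ ∑' (n : ℕ) (j : {i : ↥S // m i.1 = n}), G j.1 :=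
        (h2 y hy).trans_eq (hdec G)
      have hb : ∀ n : ℕ, (∑' j : {i : ↥S // m i.1 = n}, G j.1)
          ≤ (if n = 0 then (0:ℝ≥0∞) else t n) := by
        intro n
        by_cases hn : N' ≤ n
        · have hn0 : n ≠ 0 := by omega
          simp only [hn0, if_false]
          have hcongr : (∑' j : {i : ↥S // m i.1 = n}, G j.1)
              = ∑' j : {i : ↥S // m i.1 = n},
                c j.1.1 * (bowenBall dist T n (x j.1.1) (nrad ε n)).indicator
                  (fun _ => (1:ℝ≥0∞)) y :=
            tsum_congr fun j => by simp only [hGdef]; rw [j.2]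
          rw [hcongr]
          exact hnot n hn
        · haveI := hfibempty n (not_le.mp hn)
          rw [tsum_empty]
          exact zero_le
      have hstep : (∑' (n : ℕ) (j : {i : ↥S // m i.1 = n}), G j.1)
          ≤ ∑' n : ℕ, (if n = 0 then (0:ℝ≥0∞) else t n) := ENNReal.tsum_le_tsum hb
      have hle2 : (1:ℝ≥0∞) ≤ ∑' n : ℕ, (if n = 0 then (0:ℝ≥0∞) else t n) :=
        le_trans h1le hstep
      have hsplit : (1:ℝ≥0∞) = t 0 + ∑' n : ℕ, (if n = 0 then (0:ℝ≥0∞) else t n) := by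
        rw [← htsum]
        have h := ENNReal.tsum_eq_add_tsum_ite (f := t) 0
        convert h using 2
        exact tsum_congr fun n => by split_ifs <;> rfl
      have hcontr : t 0 + 1 ≤ (1:ℝ≥0∞) := by
        calc t 0 + 1 ≤ t 0 + ∑' n : ℕ, (if n = 0 then (0:ℝ≥0∞) else t n) :=
              add_le_add_right hle2 _
          _ = 1 := hsplit.symm
      have ht00 : t 0 ≤ 0 := by
        have := (ENNReal.add_le_add_iff_right one_ne_top).mp
          (by simpa using hcontr : t 0 + 1 ≤ 0 + 1)
        exact this
      exact absurd (nonpos_iff_eq_zero.mp ht00) (ht0 0)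
    have hcovZ : Z ⊆ ⋃ p ∈ C, bowenBall dist T p.2 p.1 (nrad (ε/2) p.2) := by
      intro y hy
      obtain ⟨n, hn, hlt⟩ := hpig y hy
      have hsub := (hJcov n hn).1 hlt
      simp only [mem_iUnion] at hsub
      obtain ⟨w, hw, hyw⟩ := hsub
      have hmem : y ∈ bowenBall dist T n w (nrad (ε/2) n) :=
        bowen_mono (hN₀ n (hN₀N'.trans hn)) w hyw
      exact mem_iUnion₂.mpr ⟨(w, n), mem_iUnion.mpr ⟨n, mem_image_of_mem _ hw⟩, hmem⟩
    have hMle : MN dist T (ε/2) N' s' Z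
        ≤ ∑' p : C, ENNReal.ofReal (Real.exp (-(p.1.2:ℝ) * s')) := by
      refine iInf_le_of_le C <|
        iInf_le_of_le (countable_iUnion fun n => ((hJc n).image _)) <|
        iInf_le_of_le ?_ <| iInf_le_of_le hcovZ le_rfl
      intro p hp
      obtain ⟨n, hn⟩ := mem_iUnion.mp hp
      obtain ⟨w, hw, rfl⟩ := hn
      show N' ≤ n
      by_contra h
      rw [hJemp n h] at hw
      exact absurd hw (notMem_empty w)
    have hchain : (∑' p : C, ENNReal.ofReal (Real.exp (-(p.1.2:ℝ) * s'))) ≤ θ := by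
      have hkey : ∀ n : ℕ, ENNReal.ofReal (Real.exp (-(n:ℝ) * s'))
          = t n * ((1-q)⁻¹ * ENNReal.ofReal (Real.exp (-(n:ℝ) * ((s:ℝ)+(δ:ℝ))))) := by
        intro n
        simp only [htdef]
        have harr : (1-q) * q^n * ((1-q)⁻¹ * ENNReal.ofReal (Real.exp (-(n:ℝ)*((s:ℝ)+(δ:ℝ)))))
            = ((1-q) * (1-q)⁻¹) * (q^n * ENNReal.ofReal (Real.exp (-(n:ℝ)*((s:ℝ)+(δ:ℝ))))) := by
          ring
        rw [harr, ENNReal.mul_inv_cancel h1q0 h1qtop, one_mul, hqpow n,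
          ← ENNReal.ofReal_mul (Real.exp_pos _).le, ← Real.exp_add]
        congr 1
        rw [hs']
        ring
      calc (∑' p : C, ENNReal.ofReal (Real.exp (-(p.1.2:ℝ) * s')))
          = ∑' p : (⋃ n : ℕ, (fun w => (w, n)) '' J n : Set (X × ℕ)),
              ENNReal.ofReal (Real.exp (-(p.1.2:ℝ) * s')) := by rw [hCdef]
        _ ≤ ∑' (n : ℕ), ∑' (p : ((fun w => (w, n)) '' J n : Set (X × ℕ))),
              ENNReal.ofReal (Real.exp (-(p.1.2:ℝ) * s')) :=
            ENNReal.tsum_iUnion_le_tsum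
              (fun p : X × ℕ => ENNReal.ofReal (Real.exp (-(p.2:ℝ) * s')))
              (fun n => (fun w => (w, n)) '' J n)
        _ = ∑' (n : ℕ), ∑' (_ : J n), ENNReal.ofReal (Real.exp (-(n:ℝ) * s')) := by
            refine tsum_congr fun n => ?_
            rw [← Equiv.tsum_eq (Equiv.Set.image _ (J n)
              (fun a b hab => by simpa using hab))
              (fun p : ((fun w => (w, n)) '' J n : Set (X × ℕ)) =>
                ENNReal.ofReal (Real.exp (-(p.1.2:ℝ) * s')))]
            exact tsum_congr fun w => rfl
        _ ≤ ∑' (n : ℕ), fiberC n * ((1-q)⁻¹ *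
              ENNReal.ofReal (Real.exp (-(n:ℝ) * ((s:ℝ)+(δ:ℝ))))) := by
            refine ENNReal.tsum_le_tsum fun n => ?_
            by_cases hn : N' ≤ n
            · calc (∑' (_ : J n), ENNReal.ofReal (Real.exp (-(n:ℝ) * s')))
                  = ∑' (_ : J n), t n * ((1-q)⁻¹ *
                      ENNReal.ofReal (Real.exp (-(n:ℝ) * ((s:ℝ)+(δ:ℝ))))) :=
                    tsum_congr fun _ => hkey n
                _ = (∑' (_ : J n), t n) * ((1-q)⁻¹ *
                      ENNReal.ofReal (Real.exp (-(n:ℝ) * ((s:ℝ)+(δ:ℝ))))) :=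
                    ENNReal.tsum_mul_right
                _ ≤ fiberC n * ((1-q)⁻¹ *
                      ENNReal.ofReal (Real.exp (-(n:ℝ) * ((s:ℝ)+(δ:ℝ))))) :=
                    mul_le_mul_left ((hJcov n hn).2) _
            · rw [hJemp n hn]
              simp
        _ = (1-q)⁻¹ * ∑' (n : ℕ), fiberC n *
              ENNReal.ofReal (Real.exp (-(n:ℝ) * ((s:ℝ)+(δ:ℝ)))) := by
            rw [← ENNReal.tsum_mul_left]
            exact tsum_congr fun n => by ring
        _ ≤ (1-q)⁻¹ * η := by
            refine mul_le_mul_right ?_ _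
            have hre : ∀ n : ℕ, fiberC n * ENNReal.ofReal (Real.exp (-(n:ℝ)*((s:ℝ)+(δ:ℝ))))
                = ∑' j : {i : ↥S // m i.1 = n},
                  c j.1.1 * ENNReal.ofReal (Real.exp (-(m j.1.1:ℝ)*((s:ℝ)+(δ:ℝ)))) := by
              intro n
              rw [hfibC]
              rw [← ENNReal.tsum_mul_right]
              exact tsum_congr fun j => by rw [j.2]
            have hdd := hdec (fun i : ↥S =>
              c i.1 * ENNReal.ofReal (Real.exp (-(m i.1:ℝ)*((s:ℝ)+(δ:ℝ)))))
            rw [tsum_congr hre, ← hdd]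
            refine le_trans (ENNReal.tsum_le_tsum fun i => ?_) hsum.le
            refine mul_le_mul_right (ENNReal.ofReal_le_ofReal (Real.exp_le_exp.mpr ?_)) _
            have hm0 : (0:ℝ) ≤ (m i.1 : ℝ) := Nat.cast_nonneg _
            nlinarith [δ.coe_nonneg]
        _ = θ := by
            rw [hηdef, ← mul_assoc, ENNReal.inv_mul_cancel h1q0 h1qtop, one_mul]
    exact hMle.trans hchain
  have hmono := MN_mono T (ε/2) s' Z hNN'
  exact le_antisymm (hmono.trans hmain.le) zero_le

end Helpers

/-- The neutralized Bowen topological entropy coincides with the neutralized weighted Bowen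
topological entropy: `h_top^{B̃}(T,Z) = h_top^{W̃B}(T,Z)`. -/
theorem htopB_eq_htopWB {X : Type*} [MetricSpace X] [CompactSpace X]
    (T : X → X) (hT : Continuous T) (Z : Set X) (hZ : Z.Nonempty) :
    htopB dist T Z = htopWB dist T Z := by
  refine le_antisymm ?_ ?_
  · -- htopB ≤ htopWB
    rw [htopWB]
    refine le_iInf fun ε => le_iInf fun hε => ?_
    rw [Wcrit]
    refine le_iInf fun s => le_iInf fun hs => ?_
    have hWN : ∀ N : ℕ, WN dist T ε N (s : ℝ) Z = 0 := fun N =>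
      le_antisymm ((le_iSup (fun N : ℕ => WN dist T ε N (s : ℝ) Z) N).trans_eq hs) zero_le
    refine ENNReal.le_of_forall_pos_le_add fun δ hδ _ => ?_
    have hM := Mlim_zero T Z hε s (δ/2) (half_pos hδ) hWN
    have hcast : ((s + 2*(δ/2) : ℝ≥0) : ℝ) = (s:ℝ) + 2*((δ/2 : ℝ≥0):ℝ) := by push_cast; ring
    have hMlim : Mlim dist T (ε/2) ((s + 2*(δ/2) : ℝ≥0) : ℝ) Z = 0 := by
      rw [Mlim, hcast]
      exact hM
    calc htopB dist T Z ≤ Mcrit dist T (ε/2) Z := by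
          rw [htopB]; exact iInf₂_le (ε/2) (half_pos hε)
      _ ≤ ((s + 2*(δ/2) : ℝ≥0) : ℝ≥0∞) := by
          rw [Mcrit]; exact iInf₂_le (s + 2*(δ/2)) hMlim
      _ = (s : ℝ≥0∞) + δ := by
          have : s + 2*(δ/2) = s + δ := by
            congr 1
            exact mul_div_cancel₀ δ two_ne_zero
          rw [this, ENNReal.coe_add]
  · -- htopWB ≤ htopB
    rw [htopB, htopWB]
    refine le_iInf fun ε => le_iInf fun hε => ?_
    refine le_trans (iInf₂_le ε hε) ?_
    rw [Wcrit, Mcrit]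
    refine le_iInf fun s => le_iInf fun hs => ?_
    refine iInf₂_le s ?_
    refine le_antisymm ?_ zero_le
    rw [← hs]
    exact iSup_mono fun N => WN_le_MN T ε (s : ℝ) N Z hZ
end

section
/- (Frostman's lemma for neutralized Bowen balls.) Let (X,d) be a compact metric space, T : X → X continuous, K a non-empty compact subset of X, s ≥ 0, N ∈ ℕ, ε > 0. Suppose c := W_{N,ε}^s(K) > 0. Then there exists a Borel probability measure μ on X such that μ(K) = 1 and μ(B_n(x, e^{-nε})) ≤ (1/c) · e^{-ns} for every x ∈ X and every n ≥ N. -/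
open Filter Set MeasureTheory ENNReal NNReal Topology

variable {X : Type*}

section FrostmanAux

set_option linter.unusedSectionVars false

variable {X : Type*} [MetricSpace X] [CompactSpace X]

theorem bowenBall_isOpen (T : X → X) (hT : Continuous T) (n : ℕ) (x : X) (r : ℝ) :
    IsOpen (bowenBall dist T n x r) := by
  have : bowenBall dist T n x r
      = ⋂ (j : ℕ) (_ : j ∈ Finset.range n), {y | dist (T^[j] x) (T^[j] y) < r} := by
    ext y; simp [bowenBall]
  rw [this]
  exact isOpen_biInter_finset fun j _ =>
    isOpen_lt (continuous_const.dist (hT.iterate j)) continuous_const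

theorem mem_bowenBall_self (T : X → X) (n : ℕ) (x : X) {r : ℝ} (hr : 0 < r) :
    x ∈ bowenBall dist T n x r := by
  intro j _; simpa using hr

theorem nrad_pos (ε : ℝ) (n : ℕ) : 0 < nrad ε n := Real.exp_pos _

variable (T : X → X) (K : Set X) (N : ℕ) (ε s : ℝ)

/-- The set of costs of admissible finite weighted families dominating `f` on `K`. -/
def costSet (f : C(X, ℝ)) : Set ℝ :=
  {r | ∃ (k : ℕ) (x : Fin k → X) (n : Fin k → ℕ) (t : Fin k → ℝ),
    (∀ i, 0 ≤ t i) ∧ (∀ i, N ≤ n i) ∧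
    (∀ y ∈ K, f y ≤ ∑ i, t i *
      (bowenBall dist T (n i) (x i) (nrad ε (n i))).indicator (fun _ => (1 : ℝ)) y) ∧
    r = ∑ i, t i * Real.exp (-(n i : ℝ) * s)}

theorem costSet_nonneg {f : C(X, ℝ)} {r : ℝ} (hr : r ∈ costSet T K N ε s f) : 0 ≤ r := by
  obtain ⟨k, x, n, t, ht, hn, hdom, rfl⟩ := hr
  exact Finset.sum_nonneg fun i _ => mul_nonneg (ht i) (Real.exp_pos _).le

theorem costSet_nonempty (hT : Continuous T) (hK : IsCompact K) (f : C(X, ℝ)) :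
    (costSet T K N ε s f).Nonempty := by
  classical
  obtain ⟨F, hF⟩ := hK.elim_finite_subcover
    (fun x : X => bowenBall dist T N x (nrad ε N))
    (fun x => bowenBall_isOpen T hT N x _)
    (fun y hy => Set.mem_iUnion.2 ⟨y, mem_bowenBall_self T N y (nrad_pos ε N)⟩)
  refine ⟨_, ⟨F.card, fun i => (F.equivFin.symm i : X), fun _ => N, fun _ => ‖f‖,
    fun i => norm_nonneg f, fun i => le_rfl, ?_, rfl⟩⟩
  intro y hy
  obtain ⟨z, hz, hyz⟩ := Set.mem_iUnion₂.1 (hF hy)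
  set i0 := F.equivFin ⟨z, hz⟩ with hi0
  have hmem : y ∈ bowenBall dist T N ((F.equivFin.symm i0 : X)) (nrad ε N) := by
    rw [hi0, Equiv.symm_apply_apply]
    exact hyz
  have h1 : ‖f‖ ≤ ‖f‖ *
      (bowenBall dist T N ((F.equivFin.symm i0 : X)) (nrad ε N)).indicator
        (fun _ => (1 : ℝ)) y := by
    rw [Set.indicator_of_mem hmem]; simp
  refine le_trans (le_trans (le_trans (le_abs_self _) (f.norm_coe_le_norm y)) h1) ?_
  exact Finset.single_le_sum (f := fun i : Fin F.card => ‖f‖ *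
      (bowenBall dist T N ((F.equivFin.symm i : X)) (nrad ε N)).indicator (fun _ => (1 : ℝ)) y)
    (fun i _ => mul_nonneg (norm_nonneg f) (Set.indicator_nonneg (fun _ _ => zero_le_one) y))
    (Finset.mem_univ i0)

noncomputable def pfun (f : C(X, ℝ)) : ℝ := sInf (costSet T K N ε s f)

theorem pfun_nonneg (f : C(X, ℝ)) : 0 ≤ pfun T K N ε s f :=
  Real.sInf_nonneg fun _ hx => costSet_nonneg T K N ε s hx

theorem pfun_le {f : C(X, ℝ)} {r : ℝ} (hr : r ∈ costSet T K N ε s f) :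
    pfun T K N ε s f ≤ r :=
  csInf_le ⟨0, fun _ h => costSet_nonneg T K N ε s h⟩ hr

theorem costSet_add {f g : C(X, ℝ)} {a b : ℝ} (ha : a ∈ costSet T K N ε s f)
    (hb : b ∈ costSet T K N ε s g) : a + b ∈ costSet T K N ε s (f + g) := by
  obtain ⟨k1, x1, n1, t1, ht1, hn1, hd1, rfl⟩ := ha
  obtain ⟨k2, x2, n2, t2, ht2, hn2, hd2, rfl⟩ := hb
  refine ⟨k1 + k2, Fin.append x1 x2, Fin.append n1 n2, Fin.append t1 t2, ?_, ?_, ?_, ?_⟩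
  · exact Fin.addCases (fun i => by simpa [Fin.append_left] using ht1 i)
      (fun i => by simpa [Fin.append_right] using ht2 i)
  · exact Fin.addCases (fun i => by simpa [Fin.append_left] using hn1 i)
      (fun i => by simpa [Fin.append_right] using hn2 i)
  · intro y hy
    rw [Fin.sum_univ_add]
    simp only [Fin.append_left, Fin.append_right, ContinuousMap.add_apply]
    exact add_le_add (hd1 y hy) (hd2 y hy)
  · rw [Fin.sum_univ_add]
    simp only [Fin.append_left, Fin.append_right]

theorem costSet_smul {f : C(X, ℝ)} {a c : ℝ} (hc : 0 < c) (ha : a ∈ costSet T K N ε s f) :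
    c * a ∈ costSet T K N ε s (c • f) := by
  obtain ⟨k, x, n, t, ht, hn, hdom, rfl⟩ := ha
  refine ⟨k, x, n, fun i => c * t i, fun i => mul_nonneg hc.le (ht i), hn, ?_, ?_⟩
  · intro y hy
    have := mul_le_mul_of_nonneg_left (hdom y hy) hc.le
    rw [Finset.mul_sum] at this
    simpa [mul_assoc] using this
  · rw [Finset.mul_sum]
    simp [mul_assoc]

theorem pfun_add (hT : Continuous T) (hK : IsCompact K) (f g : C(X, ℝ)) :
    pfun T K N ε s (f + g) ≤ pfun T K N ε s f + pfun T K N ε s g := by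
  have h1 := costSet_nonempty T K N ε s hT hK f
  have h2 := costSet_nonempty T K N ε s hT hK g
  have key : ∀ a ∈ costSet T K N ε s f, ∀ b ∈ costSet T K N ε s g,
      pfun T K N ε s (f + g) ≤ a + b :=
    fun a ha b hb => pfun_le T K N ε s (costSet_add T K N ε s ha hb)
  have step1 : ∀ b ∈ costSet T K N ε s g,
      pfun T K N ε s (f + g) - b ≤ pfun T K N ε s f := fun b hb =>
    le_csInf h1 fun a ha => sub_le_iff_le_add.2 (by linarith [key a ha b hb])
  have step2 : pfun T K N ε s (f + g) - pfun T K N ε s f ≤ pfun T K N ε s g :=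
    le_csInf h2 fun b hb => sub_le_comm.1 (step1 b hb)
  linarith

theorem pfun_smul (hT : Continuous T) (hK : IsCompact K) {c : ℝ} (hc : 0 < c) (f : C(X, ℝ)) :
    pfun T K N ε s (c • f) = c * pfun T K N ε s f := by
  have hle : ∀ (c : ℝ), 0 < c → ∀ f : C(X, ℝ),
      pfun T K N ε s (c • f) ≤ c * pfun T K N ε s f := by
    intro c hc f
    have h2 : c⁻¹ * pfun T K N ε s (c • f) ≤ pfun T K N ε s f :=
      le_csInf (costSet_nonempty T K N ε s hT hK f) fun a ha => by
        rw [inv_mul_le_iff₀ hc]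
        exact pfun_le T K N ε s (costSet_smul T K N ε s hc ha)
    calc pfun T K N ε s (c • f) = c * (c⁻¹ * pfun T K N ε s (c • f)) := by
          field_simp
      _ ≤ c * pfun T K N ε s f := mul_le_mul_of_nonneg_left h2 hc.le
  refine le_antisymm (hle c hc f) ?_
  have h3 := hle c⁻¹ (inv_pos.2 hc) (c • f)
  rw [inv_smul_smul₀ hc.ne' f] at h3
  calc c * pfun T K N ε s f ≤ c * (c⁻¹ * pfun T K N ε s (c • f)) :=
        mul_le_mul_of_nonneg_left h3 hc.le
    _ = pfun T K N ε s (c • f) := by field_simp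

theorem pfun_nonpos {f : C(X, ℝ)} (hf : ∀ y ∈ K, f y ≤ 0) : pfun T K N ε s f ≤ 0 := by
  refine pfun_le T K N ε s ?_
  exact ⟨0, Fin.elim0, Fin.elim0, Fin.elim0, fun i => i.elim0, fun i => i.elim0,
    fun y hy => by simpa using hf y hy, by simp⟩

theorem pfun_ball {n : ℕ} (hn : N ≤ n) {x : X} {f : C(X, ℝ)}
    (hf : ∀ y ∈ K, f y ≤ (bowenBall dist T n x (nrad ε n)).indicator (fun _ => (1 : ℝ)) y) :
    pfun T K N ε s f ≤ Real.exp (-(n : ℝ) * s) := by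
  have h := pfun_le T K N ε s (f := f)
    ⟨1, fun _ => x, fun _ => n, fun _ => 1, fun i => zero_le_one, fun i => hn,
    fun y hy => by simpa using hf y hy, rfl⟩
  simpa using h

theorem WN_le_cost {r : ℝ} (hKne : K.Nonempty) (hr : r ∈ costSet T K N ε s 1) :
    WN dist T ε N s K ≤ ENNReal.ofReal r := by
  classical
  obtain ⟨k, x, n, t, ht, hn, hdom, rfl⟩ := hr
  obtain ⟨x0, -⟩ := hKne
  set F : Finset ℕ := (Finset.range k).filter (fun j => ∀ h : j < k, 0 < t ⟨j, h⟩) with hF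
  set x' : ℕ → X := fun j => if h : j < k then x ⟨j, h⟩ else x0 with hx'
  set m' : ℕ → ℕ := fun j => if h : j < k then n ⟨j, h⟩ else N with hm'
  set c' : ℕ → ℝ≥0∞ := fun j => if h : j < k then ENNReal.ofReal (t ⟨j, h⟩) else 0 with hc'
  have hFk : ∀ j ∈ F, j < k := fun j hj => Finset.mem_range.1 (Finset.mem_filter.1 hj).1
  have hzero : ∀ j ∈ Finset.range k, j ∉ F → c' j = 0 := by
    intro j hj hjF
    have hjk : j < k := Finset.mem_range.1 hj
    have : ¬ (0 < t ⟨j, hjk⟩) := by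
      intro hpos
      exact hjF (Finset.mem_filter.2 ⟨hj, fun _ => hpos⟩)
    have : t ⟨j, hjk⟩ = 0 := le_antisymm (not_lt.1 this) (ht _)
    simp [hc', hjk, this]
  have cond1 : ∀ i ∈ (F : Set ℕ), 0 < c' i ∧ c' i < ∞ ∧ N ≤ m' i := by
    intro i hi
    have hik : i < k := hFk i hi
    have hipos : 0 < t ⟨i, hik⟩ := (Finset.mem_filter.1 hi).2 hik
    refine ⟨?_, ?_, ?_⟩
    · simp only [hc', dif_pos hik]
      exact ENNReal.ofReal_pos.2 hipos
    · simp only [hc', dif_pos hik]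
      exact ENNReal.ofReal_lt_top
    · simp only [hm', dif_pos hik]
      exact hn _
  have cond2 : ∀ y ∈ K, (1 : ℝ≥0∞) ≤ ∑' i : (F : Set ℕ),
      c' i.1 * (bowenBall dist T (m' i.1) (x' i.1) (nrad ε (m' i.1))).indicator
        (fun _ => (1 : ℝ≥0∞)) y := by
    intro y hy
    set g : ℕ → ℝ≥0∞ := fun j =>
      c' j * (bowenBall dist T (m' j) (x' j) (nrad ε (m' j))).indicator
        (fun _ => (1 : ℝ≥0∞)) y with hg
    have e1 : ∑' i : (F : Set ℕ), g i.1 = ∑ j ∈ F, g j := Finset.tsum_subtype' F g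
    have e2 : ∑ j ∈ F, g j = ∑ j ∈ Finset.range k, g j :=
      Finset.sum_subset (show F ⊆ Finset.range k from Finset.filter_subset _ _)
        (fun j hj hjF => by simp [hg, hzero j hj hjF])
    have e3 : ∑ j ∈ Finset.range k, g j = ∑ i : Fin k, g i :=
      (Fin.sum_univ_eq_sum_range g k).symm
    have e4 : ∀ i : Fin k, g i = ENNReal.ofReal (t i) *
        (bowenBall dist T (n i) (x i) (nrad ε (n i))).indicator (fun _ => (1 : ℝ≥0∞)) y := by
      intro i
      simp [hg, hc', hm', hx', dif_pos i.isLt]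
    have hreal : (1 : ℝ) ≤ ∑ i : Fin k, t i *
        (bowenBall dist T (n i) (x i) (nrad ε (n i))).indicator (fun _ => (1 : ℝ)) y := by
      simpa using hdom y hy
    have e5 : ∀ i : Fin k, ENNReal.ofReal (t i *
        (bowenBall dist T (n i) (x i) (nrad ε (n i))).indicator (fun _ => (1 : ℝ)) y)
        = ENNReal.ofReal (t i) *
          (bowenBall dist T (n i) (x i) (nrad ε (n i))).indicator (fun _ => (1 : ℝ≥0∞)) y := by
      intro i
      by_cases hmem : y ∈ bowenBall dist T (n i) (x i) (nrad ε (n i))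
      · rw [Set.indicator_of_mem hmem, Set.indicator_of_mem hmem]
        simp
      · rw [Set.indicator_of_notMem hmem, Set.indicator_of_notMem hmem]
        simp
    calc (1 : ℝ≥0∞) = ENNReal.ofReal 1 := by simp
      _ ≤ ENNReal.ofReal (∑ i : Fin k, t i *
          (bowenBall dist T (n i) (x i) (nrad ε (n i))).indicator (fun _ => (1 : ℝ)) y) :=
        ENNReal.ofReal_le_ofReal hreal
      _ = ∑ i : Fin k, ENNReal.ofReal (t i *
          (bowenBall dist T (n i) (x i) (nrad ε (n i))).indicator (fun _ => (1 : ℝ)) y) :=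
        ENNReal.ofReal_sum_of_nonneg fun i _ =>
          mul_nonneg (ht i) (Set.indicator_nonneg (fun _ _ => zero_le_one) y)
      _ = ∑ i : Fin k, g i := by
        refine Finset.sum_congr rfl fun i _ => ?_
        rw [e5 i, ← e4 i]
      _ = ∑' i : (F : Set ℕ), g i.1 := by rw [e1, e2, e3]
  have costb : ∑' i : (F : Set ℕ), c' i.1 * ENNReal.ofReal (Real.exp (-(m' i.1 : ℝ) * s))
      ≤ ENNReal.ofReal (∑ i : Fin k, t i * Real.exp (-(n i : ℝ) * s)) := by
    set h : ℕ → ℝ≥0∞ := fun j => c' j * ENNReal.ofReal (Real.exp (-(m' j : ℝ) * s)) with hh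
    have e1 : ∑' i : (F : Set ℕ), h i.1 = ∑ j ∈ F, h j := Finset.tsum_subtype' F h
    have e2 : ∑ j ∈ F, h j ≤ ∑ j ∈ Finset.range k, h j :=
      Finset.sum_le_sum_of_subset (show F ⊆ Finset.range k from Finset.filter_subset _ _)
    have e3 : ∑ j ∈ Finset.range k, h j = ∑ i : Fin k, h i :=
      (Fin.sum_univ_eq_sum_range h k).symm
    have e4 : ∀ i : Fin k, h i = ENNReal.ofReal (t i * Real.exp (-(n i : ℝ) * s)) := by
      intro i
      rw [ENNReal.ofReal_mul (ht i)]
      simp [hh, hc', hm', dif_pos i.isLt]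
    calc ∑' i : (F : Set ℕ), h i.1 = ∑ j ∈ F, h j := e1
      _ ≤ ∑ j ∈ Finset.range k, h j := e2
      _ = ∑ i : Fin k, h i := e3
      _ = ∑ i : Fin k, ENNReal.ofReal (t i * Real.exp (-(n i : ℝ) * s)) :=
        Finset.sum_congr rfl fun i _ => e4 i
      _ = ENNReal.ofReal (∑ i : Fin k, t i * Real.exp (-(n i : ℝ) * s)) :=
        (ENNReal.ofReal_sum_of_nonneg fun i _ =>
          mul_nonneg (ht i) (Real.exp_pos _).le).symm
  refine le_trans ?_ costb
  refine iInf_le_of_le (F : Set ℕ) ?_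
  refine iInf_le_of_le x' ?_
  refine iInf_le_of_le m' ?_
  refine iInf_le_of_le c' ?_
  refine iInf_le_of_le cond1 ?_
  exact iInf_le _ cond2

end FrostmanAux


section ContentAux

set_option linter.unusedSectionVars false

variable {X : Type*} [MetricSpace X] [CompactSpace X] (K : Set X) (L : C(X, ℝ) →ₗ[ℝ] ℝ)

/-- The set of values of `L` on admissible test functions for the set `E`. -/
def testSet (E : Set X) : Set ℝ :=
  {r | ∃ f : C(X, ℝ), (∀ x, 0 ≤ f x) ∧ (∀ x ∈ E, 1 ≤ f x) ∧ r = L f}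

theorem testSet_nonempty (E : Set X) : (testSet L E).Nonempty :=
  ⟨L 1, 1, fun _ => zero_le_one, fun _ _ => le_rfl, rfl⟩

noncomputable def ell (E : Set X) : ℝ := sInf (testSet L E)

variable (hpos : ∀ f : C(X, ℝ), (∀ y ∈ K, 0 ≤ f y) → 0 ≤ L f)
include hpos

theorem testSet_nonneg {E : Set X} {r : ℝ} (hr : r ∈ testSet L E) : 0 ≤ r := by
  obtain ⟨f, hf0, -, rfl⟩ := hr
  exact hpos f fun y _ => hf0 y

theorem ell_nonneg (E : Set X) : 0 ≤ ell L E :=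
  Real.sInf_nonneg fun _ hr => testSet_nonneg K L hpos hr

theorem ell_le {E : Set X} {r : ℝ} (hr : r ∈ testSet L E) : ell L E ≤ r :=
  csInf_le ⟨0, fun _ h => testSet_nonneg K L hpos h⟩ hr

theorem ell_mono {E E' : Set X} (h : E ⊆ E') : ell L E ≤ ell L E' :=
  csInf_le_csInf ⟨0, fun _ h' => testSet_nonneg K L hpos h'⟩ (testSet_nonempty L E')
    (fun r => fun ⟨f, hf0, hf1, hr⟩ => ⟨f, hf0, fun x hx => hf1 x (h hx), hr⟩)

theorem ell_union_le (E1 E2 : Set X) : ell L (E1 ∪ E2) ≤ ell L E1 + ell L E2 := by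
  have key : ∀ a ∈ testSet L E1, ∀ b ∈ testSet L E2, ell L (E1 ∪ E2) ≤ a + b := by
    rintro a ⟨f1, hf10, hf11, rfl⟩ b ⟨f2, hf20, hf21, rfl⟩
    rw [← map_add]
    refine ell_le K L hpos ⟨f1 + f2, fun x => add_nonneg (hf10 x) (hf20 x), ?_, rfl⟩
    rintro x (hx | hx)
    · simpa using add_le_add (hf11 x hx) (hf20 x)
    · simpa using add_le_add (hf10 x) (hf21 x hx)
  have step1 : ∀ b ∈ testSet L E2, ell L (E1 ∪ E2) - b ≤ ell L E1 := fun b hb =>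
    le_csInf (testSet_nonempty L E1) fun a ha => by linarith [key a ha b hb]
  have step2 : ell L (E1 ∪ E2) - ell L E1 ≤ ell L E2 :=
    le_csInf (testSet_nonempty L E2) fun b hb => sub_le_comm.1 (step1 b hb)
  linarith

theorem ell_union_ge {E1 E2 : Set X} (h1 : IsCompact E1) (h2 : IsClosed E2)
    (hd : Disjoint E1 E2) : ell L E1 + ell L E2 ≤ ell L (E1 ∪ E2) := by
  refine le_csInf (testSet_nonempty L _) ?_
  rintro r ⟨f, hf0, hf1, rfl⟩
  obtain ⟨g, hg2, hg1, hgI⟩ := exists_continuous_zero_one_of_isCompact' h1 h2 hd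
  have hA : ell L E1 ≤ L (f * g) := by
    refine ell_le K L hpos ⟨f * g, fun x => mul_nonneg (hf0 x) (hgI x).1, ?_, rfl⟩
    intro x hx
    have : g x = 1 := hg1 hx
    simpa [this] using hf1 x (Set.mem_union_left _ hx)
  have hB : ell L E2 ≤ L (f * (1 - g)) := by
    refine ell_le K L hpos
      ⟨f * (1 - g), fun x => mul_nonneg (hf0 x) (by simpa using (hgI x).2), ?_, rfl⟩
    intro x hx
    have : g x = 0 := hg2 hx
    simpa [this] using hf1 x (Set.mem_union_right _ hx)
  have hsum : L (f * g) + L (f * (1 - g)) = L f := by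
    rw [← map_add]
    congr 1
    ext x
    simp [ContinuousMap.mul_apply]
    ring
  linarith

/-- The content associated with the positive linear functional `L`. -/
noncomputable def frostmanContent : MeasureTheory.Content X where
  toFun E := (ell L (E : Set X)).toNNReal
  mono' K1 K2 h := Real.toNNReal_mono (ell_mono K L hpos h)
  sup_disjoint' K1 K2 hd hc1 hc2 := by
    have hle := ell_union_le K L hpos (K1 : Set X) (K2 : Set X)
    have hge := ell_union_ge K L hpos (E1 := (K1 : Set X)) (E2 := (K2 : Set X)) K1.2 hc2 hd
    have hcoe : ((K1 ⊔ K2 : TopologicalSpace.Compacts X) : Set X) = (K1 : Set X) ∪ K2 :=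
      TopologicalSpace.Compacts.coe_sup K1 K2
    rw [hcoe]
    rw [show ell L ((K1 : Set X) ∪ K2) = ell L (K1 : Set X) + ell L (K2 : Set X) by linarith]
    exact Real.toNNReal_add (ell_nonneg K L hpos _) (ell_nonneg K L hpos _)
  sup_le' K1 K2 := by
    have hle := ell_union_le K L hpos (K1 : Set X) (K2 : Set X)
    have hcoe : ((K1 ⊔ K2 : TopologicalSpace.Compacts X) : Set X) = (K1 : Set X) ∪ K2 :=
      TopologicalSpace.Compacts.coe_sup K1 K2
    rw [hcoe, ← Real.toNNReal_add (ell_nonneg K L hpos _) (ell_nonneg K L hpos _)]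
    exact Real.toNNReal_mono hle

theorem frostmanContent_apply (E : TopologicalSpace.Compacts X) :
    (frostmanContent K L hpos E : ℝ≥0∞) = ((ell L (E : Set X)).toNNReal : ℝ≥0∞) := rfl

end ContentAux

set_option maxHeartbeats 2000000 in
/-- Frostman's lemma for neutralized Bowen balls: if `c := W_{N,ε}^s(K) > 0` for a non-empty
compact set `K`, then there is a Borel probability measure `μ` with `μ(K) = 1` such that
`μ(B_n(x, e^{-nε})) ≤ (1/c) e^{-ns}` for all `x ∈ X` and all `n ≥ N`. -/
theorem frostman_neutralized {X : Type*} [MetricSpace X] [CompactSpace X]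
    [MeasurableSpace X] [BorelSpace X]
    (T : X → X) (hT : Continuous T) (K : Set X) (hK : IsCompact K) (hKne : K.Nonempty)
    (s : ℝ) (hs : 0 ≤ s) (N : ℕ) (ε : ℝ) (hε : 0 < ε)
    (hc : 0 < WN dist T ε N s K) :
    ∃ μ : Measure X, IsProbabilityMeasure μ ∧ μ K = 1 ∧
      ∀ x : X, ∀ n ≥ N,
        μ (bowenBall dist T n x (nrad ε n)) ≤
          (WN dist T ε N s K)⁻¹ * ENNReal.ofReal (Real.exp (-(n : ℝ) * s)) := by
  classical
  have hXne : Nonempty X := ⟨hKne.choose⟩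
  set c : ℝ≥0∞ := WN dist T ε N s K with hcdef
  obtain ⟨r1, hr1⟩ := costSet_nonempty T K N ε s hT hK 1
  have hcle : c ≤ ENNReal.ofReal r1 := WN_le_cost T K N ε s hKne hr1
  have hcne_top : c ≠ ∞ := fun h => by
    rw [h] at hcle; exact ENNReal.ofReal_ne_top (top_le_iff.1 hcle)
  have hcR_pos : 0 < c.toReal := ENNReal.toReal_pos hc.ne' hcne_top
  have hp1 : c.toReal ≤ pfun T K N ε s 1 := by
    refine le_csInf ⟨r1, hr1⟩ fun r hr => ?_
    have h1 := WN_le_cost T K N ε s hKne hr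
    have h2 : c.toReal ≤ (ENNReal.ofReal r).toReal :=
      ENNReal.toReal_mono ENNReal.ofReal_ne_top h1
    rwa [ENNReal.toReal_ofReal (costSet_nonneg T K N ε s hr)] at h2
  have h1ne : (1 : C(X, ℝ)) ≠ 0 := by
    intro h
    have h2 := ContinuousMap.congr_fun h hKne.choose
    simpa using h2
  -- Hahn–Banach extension of `t • 1 ↦ t * pfun 1` dominated by the sublinear `pfun`
  set f0 : C(X, ℝ) →ₗ.[ℝ] ℝ :=
    LinearPMap.mkSpanSingleton (1 : C(X, ℝ)) (pfun T K N ε s 1) h1ne with hf0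
  have hfdom : ∀ v : f0.domain, f0 v ≤ pfun T K N ε s v := by
    intro v
    obtain ⟨a, ha⟩ := Submodule.mem_span_singleton.1 v.2
    have hmem : a • (1 : C(X, ℝ)) ∈ f0.domain := by rw [ha]; exact v.2
    have hv : v = ⟨a • (1 : C(X, ℝ)), hmem⟩ := Subtype.ext ha.symm
    have happ : f0 ⟨a • (1 : C(X, ℝ)), hmem⟩ = a • pfun T K N ε s 1 :=
      LinearPMap.mkSpanSingleton'_apply _ _ _ a hmem
    rw [hv, happ]
    show a • pfun T K N ε s 1 ≤ pfun T K N ε s (a • 1)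
    rcases lt_trichotomy a 0 with hA | hA | hA
    · have hpos' : (0 : ℝ) < -a := neg_pos.2 hA
      have h1 := pfun_add T K N ε s hT hK (a • (1 : C(X, ℝ))) ((-a) • 1)
      have h2 : (a • (1 : C(X, ℝ))) + ((-a) • 1) = 0 := by
        rw [← add_smul]; simp
      rw [h2] at h1
      have h3 := pfun_nonneg T K N ε s 0
      have h4 := pfun_smul T K N ε s hT hK hpos' (1 : C(X, ℝ))
      rw [h4] at h1
      simp only [smul_eq_mul]
      linarith
    · subst hA
      simp only [zero_smul, smul_eq_mul, zero_mul]
      exact pfun_nonneg T K N ε s _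
    · rw [smul_eq_mul, ← pfun_smul T K N ε s hT hK hA]
  obtain ⟨L, hLext, hLle⟩ := exists_extension_of_le_sublinear f0 (pfun T K N ε s)
    (fun a ha f => pfun_smul T K N ε s hT hK ha f)
    (fun f g => pfun_add T K N ε s hT hK f g)
    hfdom
  have hL1 : L 1 = pfun T K N ε s 1 := by
    have hmem : (1 : C(X, ℝ)) ∈ f0.domain :=
      Submodule.mem_span_singleton_self (1 : C(X, ℝ))
    have h := hLext ⟨1, hmem⟩
    have happ : f0 ⟨1, hmem⟩ = pfun T K N ε s 1 :=
      LinearPMap.mkSpanSingleton'_apply_self _ _ _ hmem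
    exact h.trans happ
  have hpos : ∀ f : C(X, ℝ), (∀ y ∈ K, 0 ≤ f y) → 0 ≤ L f := by
    intro f hf
    have h1 : L (-f) ≤ pfun T K N ε s (-f) := hLle (-f)
    have h2 : pfun T K N ε s (-f) ≤ 0 := by
      refine pfun_nonpos T K N ε s fun y hy => ?_
      simp only [ContinuousMap.neg_apply]
      exact neg_nonpos.2 (hf y hy)
    have h3 : L (-f) = -L f := map_neg L f
    linarith
  set CC : MeasureTheory.Content X := frostmanContent K L hpos with hCC
  set μ0 := CC.measure with hμ0
  have hopen : ∀ (U : Set X) (hU : IsOpen U), μ0 U = CC.innerContent ⟨U, hU⟩ := by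
    intro U hU
    rw [hμ0, MeasureTheory.Content.measure_apply _ hU.measurableSet]
    exact CC.outerMeasure_opens ⟨U, hU⟩
  -- the bound on Bowen balls
  have hball : ∀ (x : X) (n : ℕ), N ≤ n →
      μ0 (bowenBall dist T n x (nrad ε n)) ≤ ENNReal.ofReal (Real.exp (-(n : ℝ) * s)) := by
    intro x n hn
    rw [hopen _ (bowenBall_isOpen T hT n x _)]
    refine iSup₂_le fun E hE => ?_
    obtain ⟨g, hg0, hg1, hgI⟩ := exists_continuous_zero_one_of_isCompact' E.2
      (bowenBall_isOpen T hT n x (nrad ε n)).isClosed_compl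
      ((disjoint_compl_right).mono_left hE)
    have h1 : ell L (E : Set X) ≤ L g :=
      ell_le K L hpos ⟨g, fun z => (hgI z).1, fun z hz => (hg1 hz).ge, rfl⟩
    have h2 : L g ≤ pfun T K N ε s g := hLle g
    have h3 : pfun T K N ε s g ≤ Real.exp (-(n : ℝ) * s) := by
      refine pfun_ball T K N ε s hn (x := x) fun y hy => ?_
      by_cases hmem : y ∈ bowenBall dist T n x (nrad ε n)
      · rw [Set.indicator_of_mem hmem]; exact (hgI y).2
      · rw [Set.indicator_of_notMem hmem]; exact (hg0 hmem).le
    calc (CC E : ℝ≥0∞) = ((ell L (E : Set X)).toNNReal : ℝ≥0∞) := by rw [hCC]; rfl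
      _ ≤ ENNReal.ofReal (Real.exp (-(n : ℝ) * s)) :=
          ENNReal.ofReal_le_ofReal (by linarith)
  -- μ0 is finite and bounded below by c on the whole space
  have huniv_le : μ0 Set.univ ≤ (CC ⟨Set.univ, isCompact_univ⟩ : ℝ≥0∞) := by
    rw [hopen Set.univ isOpen_univ]
    exact CC.innerContent_le ⟨Set.univ, isOpen_univ⟩ ⟨Set.univ, isCompact_univ⟩ subset_rfl
  have hfin : μ0 Set.univ ≠ ∞ := ne_top_of_le_ne_top ENNReal.coe_ne_top huniv_le
  have huniv_ge : c ≤ μ0 Set.univ := by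
    rw [hopen Set.univ isOpen_univ]
    refine le_trans ?_
      (CC.le_innerContent ⟨Set.univ, isCompact_univ⟩ ⟨Set.univ, isOpen_univ⟩ subset_rfl)
    have hellu : c.toReal ≤ ell L (Set.univ : Set X) := by
      refine le_csInf (testSet_nonempty L _) ?_
      rintro r ⟨f, hf0, hf1, rfl⟩
      have h1 : 0 ≤ L (f - 1) := by
        refine hpos (f - 1) fun y hy => ?_
        simp only [ContinuousMap.sub_apply, ContinuousMap.one_apply]
        linarith [hf1 y trivial]
      have h2 : L f = L 1 + L (f - 1) := by
        rw [← map_add]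
        congr 1
        ext z
        simp
      rw [hL1] at h2
      linarith
    calc c = ENNReal.ofReal c.toReal := (ENNReal.ofReal_toReal hcne_top).symm
      _ ≤ ENNReal.ofReal (ell L (Set.univ : Set X)) :=
          ENNReal.ofReal_le_ofReal hellu
      _ = (CC ⟨Set.univ, isCompact_univ⟩ : ℝ≥0∞) := by rw [hCC]; rfl
  have hne0 : μ0 Set.univ ≠ 0 := (lt_of_lt_of_le hc huniv_ge).ne'
  -- μ0 vanishes outside K
  have hcompl : μ0 Kᶜ = 0 := by
    rw [hopen Kᶜ hK.isClosed.isOpen_compl]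
    refine le_antisymm ?_ zero_le
    refine iSup₂_le fun E hE => ?_
    obtain ⟨g, hg0, hg1, hgI⟩ := exists_continuous_zero_one_of_isCompact' E.2
      hK.isClosed (Set.subset_compl_iff_disjoint_right.1 hE)
    have h1 : ell L (E : Set X) ≤ L g :=
      ell_le K L hpos ⟨g, fun z => (hgI z).1, fun z hz => (hg1 hz).ge, rfl⟩
    have h2 : L g ≤ pfun T K N ε s g := hLle g
    have h3 : pfun T K N ε s g ≤ 0 :=
      pfun_nonpos T K N ε s fun y hy => (hg0 hy).le
    have h4 : ell L (E : Set X) ≤ 0 := le_trans h1 (le_trans h2 h3)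
    have h5 : (ell L (E : Set X)).toNNReal = 0 := Real.toNNReal_of_nonpos h4
    calc (CC E : ℝ≥0∞) = ((ell L (E : Set X)).toNNReal : ℝ≥0∞) := by rw [hCC]; rfl
      _ ≤ 0 := by rw [h5]; exact le_of_eq ENNReal.coe_zero
  -- normalize
  refine ⟨(μ0 Set.univ)⁻¹ • μ0, ?_, ?_, ?_⟩
  · exact ⟨by rw [Measure.smul_apply, smul_eq_mul, ENNReal.inv_mul_cancel hne0 hfin]⟩
  · have hKuniv : μ0 K = μ0 Set.univ := by
      have h := MeasureTheory.measure_add_measure_compl (μ := μ0) hK.isClosed.measurableSet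
      rwa [hcompl, add_zero] at h
    rw [Measure.smul_apply, smul_eq_mul, hKuniv, ENNReal.inv_mul_cancel hne0 hfin]
  · intro x n hn
    rw [Measure.smul_apply, smul_eq_mul]
    exact mul_le_mul' (ENNReal.inv_le_inv.2 huniv_ge) (hball x n hn)
end

section
/- Let (X,d) be a compact metric space and T : X → X continuous. Then the neutralized topological entropy of X satisfies h̃_top(T,X) = lim_{k→∞} limsup_{m→∞} (1/(mk)) · log r_{mk}(X, 1/k). -/
open Filter Set MeasureTheory ENNReal NNReal Topology

variable {X : Type*}

/-- `r_n(X,ε)`: the smallest cardinality of an `(n,ε)`-spanning set of `X` in the neutralized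
sense, i.e. a set `E` such that every `x ∈ X` is within `d_n`-distance `e^{-nε}` of `E`. -/
noncomputable def spanCard (d : X → X → ℝ) (T : X → X) (n : ℕ) (ε : ℝ) : ℕ :=
  sInf {k : ℕ | ∃ E : Finset X, E.card = k ∧
    ∀ x : X, ∃ y ∈ E, ∀ j < n, d (T^[j] x) (T^[j] y) ≤ nrad ε n}

/-- `r(X,ε) = limsup_{n→∞} (1/n) log r_n(X,ε)`. -/
noncomputable def rSpan (d : X → X → ℝ) (T : X → X) (ε : ℝ) : ℝ≥0∞ :=
  limsup (fun n : ℕ => ENNReal.ofReal (Real.log (spanCard d T n ε) / (n : ℝ))) atTop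

/-- The neutralized topological entropy `h̃_top(T,X) = lim_{ε→0} r(X,ε)`
(the quantity is monotone in `ε`, so the limit is the infimum over `ε > 0`). -/
noncomputable def htopN (d : X → X → ℝ) (T : X → X) : ℝ≥0∞ :=
  ⨅ (ε : ℝ) (_ : 0 < ε), rSpan d T ε

section aux

variable {X : Type*} [MetricSpace X] [CompactSpace X] {T : X → X}

lemma log_nat_mono {a b : ℕ} (h : a ≤ b) : Real.log a ≤ Real.log b := by
  rcases Nat.eq_zero_or_pos a with rfl | ha
  · simpa using Real.log_natCast_nonneg b
  · exact Real.log_le_log (by exact_mod_cast ha) (by exact_mod_cast h)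

lemma nrad_mono {ε : ℝ} (hε : 0 ≤ ε) {n n' : ℕ} (h : n ≤ n') : nrad ε n' ≤ nrad ε n := by
  apply Real.exp_le_exp.mpr
  have : (n : ℝ) ≤ (n' : ℝ) := by exact_mod_cast h
  nlinarith

lemma spanset_nonempty (hT : Continuous T) (n : ℕ) (ε : ℝ) :
    {k : ℕ | ∃ E : Finset X, E.card = k ∧
      ∀ x : X, ∃ y ∈ E, ∀ j < n, dist (T^[j] x) (T^[j] y) ≤ nrad ε n}.Nonempty := by
  obtain ⟨t, ht⟩ := IsCompact.elim_finite_subcover isCompact_univ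
    (fun y : X => {x | ∀ j < n, dist (T^[j] y) (T^[j] x) < nrad ε n})
    (fun y => by
      show IsOpen {x | ∀ j < n, dist (T^[j] y) (T^[j] x) < nrad ε n}
      have : {x | ∀ j < n, dist (T^[j] y) (T^[j] x) < nrad ε n}
          = ⋂ j ∈ Finset.range n, {x | dist (T^[j] y) (T^[j] x) < nrad ε n} := by
        ext x; simp
      rw [this]
      exact isOpen_biInter_finset fun j _ =>
        isOpen_lt (Continuous.dist continuous_const (hT.iterate j)) continuous_const)
    (fun x _ => Set.mem_iUnion.mpr ⟨x, fun j hj => by simp [Real.exp_pos, nrad]⟩)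
  refine ⟨t.card, t, rfl, fun x => ?_⟩
  obtain ⟨y, hy, hx⟩ := Set.mem_iUnion₂.mp (ht (Set.mem_univ x))
  exact ⟨y, hy, fun j hj => by rw [dist_comm]; exact (hx j hj).le⟩

lemma spanCard_mono_n (hT : Continuous T) {ε : ℝ} (hε : 0 ≤ ε) {n n' : ℕ} (h : n ≤ n') :
    spanCard dist T n ε ≤ spanCard dist T n' ε := by
  obtain ⟨E, hE, hspan⟩ := Nat.sInf_mem (spanset_nonempty hT n' ε)
  have hE' : E.card = spanCard dist T n' ε := hE
  rw [← hE']
  apply Nat.sInf_le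
  refine ⟨E, rfl, fun x => ?_⟩
  obtain ⟨y, hy, hd⟩ := hspan x
  exact ⟨y, hy, fun j hj => (hd j (lt_of_lt_of_le hj h)).trans (nrad_mono hε h)⟩

lemma spanCard_mono_eps (hT : Continuous T) {ε ε' : ℝ} (h : ε ≤ ε') (n : ℕ) :
    spanCard dist T n ε ≤ spanCard dist T n ε' := by
  obtain ⟨E, hE, hspan⟩ := Nat.sInf_mem (spanset_nonempty hT n ε')
  have hE' : E.card = spanCard dist T n ε' := hE
  rw [← hE']
  apply Nat.sInf_le
  refine ⟨E, rfl, fun x => ?_⟩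
  obtain ⟨y, hy, hd⟩ := hspan x
  refine ⟨y, hy, fun j hj => (hd j hj).trans (Real.exp_le_exp.mpr ?_)⟩
  have : (0:ℝ) ≤ (n:ℝ) := Nat.cast_nonneg n
  nlinarith

lemma rSpan_mono (hT : Continuous T) {ε ε' : ℝ} (h : ε ≤ ε') :
    rSpan dist T ε ≤ rSpan dist T ε' := by
  refine limsup_le_limsup (Eventually.of_forall fun n => ?_)
  apply ENNReal.ofReal_le_ofReal
  exact div_le_div_of_nonneg_right (log_nat_mono (spanCard_mono_eps hT h n))
    (Nat.cast_nonneg n)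

end aux

section key

variable {X : Type*} [MetricSpace X] [CompactSpace X] {T : X → X}

lemma key_eq (hT : Continuous T) {k : ℕ} (hk : 0 < k) :
    limsup (fun m : ℕ =>
        ENNReal.ofReal (Real.log (spanCard dist T (m * k) (1 / (k : ℝ))) / ((m * k : ℕ) : ℝ)))
      atTop = rSpan dist T (1 / (k : ℝ)) := by
  set f : ℕ → ℝ≥0∞ := fun n =>
    ENNReal.ofReal (Real.log (spanCard dist T n (1 / (k : ℝ))) / (n : ℝ)) with hf
  have hεpos : (0:ℝ) ≤ 1 / (k : ℝ) := by positivity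
  apply le_antisymm
  · -- limsup along subsequence ≤ full limsup
    have h1 : (fun m : ℕ =>
        ENNReal.ofReal (Real.log (spanCard dist T (m * k) (1 / (k : ℝ))) / ((m * k : ℕ) : ℝ)))
        = f ∘ (fun m : ℕ => m * k) := rfl
    rw [h1, Filter.limsup_comp]
    refine limsup_le_limsup_of_le ?_
    exact Filter.tendsto_atTop_mono (fun m => Nat.le_mul_of_pos_right m hk) tendsto_id
  · -- full limsup ≤ limsup along subsequence
    refine le_of_forall_gt_imp_ge_of_dense fun b hb => ?_
    have hev : ∀ᶠ m in atTop, (fun m : ℕ =>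
        ENNReal.ofReal (Real.log (spanCard dist T (m * k) (1 / (k : ℝ))) / ((m * k : ℕ) : ℝ))) m
        < b := eventually_lt_of_limsup_lt hb
    have htendm : Tendsto (fun n : ℕ => n / k + 1) atTop atTop := by
      refine Filter.tendsto_atTop.mpr fun M => Filter.eventually_atTop.mpr ⟨M * k, fun n hn => ?_⟩
      have : M ≤ n / k := (Nat.le_div_iff_mul_le hk).mpr hn
      omega
    have hev2 : ∀ᶠ n in atTop, ENNReal.ofReal
        (Real.log (spanCard dist T ((n / k + 1) * k) (1 / (k : ℝ))) / (((n / k + 1) * k : ℕ) : ℝ))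
        < b := htendm.eventually hev
    set c : ℕ → ℝ≥0∞ := fun n => ENNReal.ofReal (((n : ℝ) + k) / n) with hc
    have hbound : ∀ᶠ n in atTop, f n ≤ b * c n := by
      filter_upwards [hev2, Filter.eventually_ge_atTop 1] with n hgn hn1
      set m : ℕ := n / k + 1 with hm
      set N : ℕ := m * k with hN
      have hdm : k * (n / k) + n % k = n := Nat.div_add_mod n k
      have hcomm : k * (n / k) = n / k * k := Nat.mul_comm _ _
      have hmod : n % k < k := Nat.mod_lt n hk
      have hnN : n < N := by
        have : N = n / k * k + k := by rw [hN, hm]; ring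
        omega
      have hNnk : N ≤ n + k := by
        have h1 : n / k * k ≤ n := Nat.div_mul_le_self n k
        have : N = n / k * k + k := by rw [hN, hm]; ring
        omega
      have hnpos : (0:ℝ) < n := by exact_mod_cast hn1
      have hNpos : (0:ℝ) < N := by
        have : 0 < N := by omega
        exact_mod_cast this
      set A : ℝ := Real.log (spanCard dist T N (1 / (k : ℝ))) with hA
      have hA0 : 0 ≤ A := Real.log_natCast_nonneg _
      have haA : Real.log (spanCard dist T n (1 / (k : ℝ))) ≤ A :=
        log_nat_mono (spanCard_mono_n hT hεpos hnN.le)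
      have hreal : Real.log (spanCard dist T n (1 / (k : ℝ))) / (n : ℝ)
          ≤ (A / N) * (((n : ℝ) + k) / n) := by
        have h1 : Real.log (spanCard dist T n (1 / (k : ℝ))) / (n : ℝ) ≤ A / n :=
          div_le_div_of_nonneg_right haA (le_of_lt hnpos)
        have h2 : A / (n : ℝ) = A * N / (N * n) := by
          field_simp
        have h3 : A * (N : ℝ) / (N * n) ≤ A * ((n : ℝ) + k) / (N * n) := by
          apply div_le_div_of_nonneg_right _ (by positivity)
          apply mul_le_mul_of_nonneg_left _ hA0
          exact_mod_cast hNnk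
        have h4 : A * ((n : ℝ) + k) / ((N : ℝ) * n) = (A / N) * (((n : ℝ) + k) / n) :=
          (div_mul_div_comm A (N : ℝ) ((n:ℝ) + k) (n : ℝ)).symm
        calc Real.log (spanCard dist T n (1 / (k : ℝ))) / (n : ℝ)
            ≤ A / n := h1
          _ = A * N / (N * n) := h2
          _ ≤ A * ((n : ℝ) + k) / (N * n) := h3
          _ = (A / N) * (((n : ℝ) + k) / n) := h4
      calc f n ≤ ENNReal.ofReal ((A / N) * (((n : ℝ) + k) / n)) :=
            ENNReal.ofReal_le_ofReal hreal
        _ = ENNReal.ofReal (A / N) * c n := by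
            rw [hc, ENNReal.ofReal_mul (by positivity)]
        _ ≤ b * c n := by
            apply mul_le_mul_left
            exact le_of_lt hgn
    have hctend : Tendsto c atTop (𝓝 1) := by
      have hreal : Tendsto (fun n : ℕ => ((n : ℝ) + k) / n) atTop (𝓝 1) := by
        have h0 : Tendsto (fun n : ℕ => 1 + (k : ℝ) / n) atTop (𝓝 (1 + 0)) :=
          tendsto_const_nhds.add (tendsto_const_div_atTop_nhds_zero_nat _)
      
        rw [add_zero] at h0
        refine h0.congr' ?_
        filter_upwards [Filter.eventually_ge_atTop 1] with n hn
        have hnpos : (0:ℝ) < n := by exact_mod_cast hn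
        field_simp
      have := ENNReal.tendsto_ofReal hreal
      simpa using this
    have hbc : Tendsto (fun n => b * c n) atTop (𝓝 b) := by
      have := ENNReal.Tendsto.const_mul (a := b) hctend (Or.inl one_ne_zero)
      simpa using this
    calc limsup f atTop ≤ limsup (fun n => b * c n) atTop := limsup_le_limsup hbound
      _ = b := hbc.limsup_eq

end key


/-- The neutralized topological entropy satisfies
`h̃_top(T,X) = lim_{k→∞} limsup_{m→∞} (1/(mk)) log r_{mk}(X, 1/k)`. -/
theorem htopN_eq_lim_limsup {X : Type*} [MetricSpace X] [CompactSpace X]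
    (T : X → X) (hT : Continuous T) :
    Tendsto (fun k : ℕ =>
        limsup (fun m : ℕ =>
          ENNReal.ofReal (Real.log (spanCard dist T (m * k) (1 / (k : ℝ))) / ((m * k : ℕ) : ℝ)))
          atTop)
      atTop (𝓝 (htopN dist T)) := by
  set F : ℕ → ℝ≥0∞ := fun k => rSpan dist T (1 / (k : ℝ)) with hF
  have hanti : Antitone fun j : ℕ => F (j + 1) := by
    intro i j hij
    apply rSpan_mono hT
    apply one_div_le_one_div_of_le
    · exact_mod_cast Nat.succ_pos i
    · exact_mod_cast Nat.succ_le_succ hij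
  have h0 : Tendsto (fun j : ℕ => F (j + 1)) atTop (𝓝 (⨅ j : ℕ, F (j + 1))) :=
    tendsto_atTop_iInf hanti
  have hiInf : (⨅ j : ℕ, F (j + 1)) = htopN dist T := by
    apply le_antisymm
    · refine le_iInf fun ε => le_iInf fun hε => ?_
      obtain ⟨j, hj⟩ := exists_nat_one_div_lt hε
      refine (iInf_le _ j).trans (rSpan_mono hT ?_)
      push_cast
      exact hj.le
    · refine le_iInf fun j => ?_
      have hpos : (0:ℝ) < 1 / ((j + 1 : ℕ) : ℝ) := by
        have : (0:ℝ) < ((j + 1 : ℕ) : ℝ) := by exact_mod_cast Nat.succ_pos j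
        positivity
      exact iInf_le_of_le (1 / ((j + 1 : ℕ) : ℝ)) (iInf_le _ hpos)
  rw [hiInf] at h0
  have h1 : Tendsto F atTop (𝓝 (htopN dist T)) :=
    (tendsto_add_atTop_iff_nat 1).mp h0
  refine Tendsto.congr' ?_ h1
  filter_upwards [Filter.eventually_ge_atTop 1] with k hk
  exact (key_eq hT hk).symm
end

section
/- Let N ≥ 3 and let Σ_N = {0,…,N−1}^ℕ be the one-sided full shift on N symbols with the shift map σ((x_n)_{n≥0}) = (x_{n+1})_{n≥0}, equipped with the metric d(x,y) = N^{−min{ n ≥ 0 : x_n ≠ y_n }} for x ≠ y and d(x,x) = 0. Then the neutralized Bowen topological entropy of the full space equals log N: h_top^{B̃}(σ, Σ_N) = log N. -/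
open Filter Set MeasureTheory ENNReal NNReal Topology

variable {X : Type*}

section NeutralizedHelpers


lemma shift_iter' {N : ℕ} : ∀ (j : ℕ) (x : ℕ → Fin N),
    (fun (x : ℕ → Fin N) i => x (i+1))^[j] x = fun i => x (i + j)
  | 0, x => by simp
  | (j+1), x => by
      rw [Function.iterate_succ_apply, shift_iter' j]
      funext i; show x (i + j + 1) = x (i + (j+1)); rw [Nat.add_assoc]

lemma floor_mul_bound (u : ℝ) (N : ℕ) (hN : 0 < N) :
    (N:ℤ) * ⌊u⌋ ≤ ⌊u * N⌋ ∧ ⌊u * N⌋ < N * ⌊u⌋ + N := by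
  have hNR : (0:ℝ) < N := by exact_mod_cast hN
  constructor
  · rw [Int.le_floor]
    push_cast
    calc (N:ℝ) * ⌊u⌋ = ⌊u⌋ * N := by ring
    _ ≤ u * N := mul_le_mul_of_nonneg_right (Int.floor_le u) hNR.le
  · rw [Int.floor_lt]
    push_cast
    calc u * N < (⌊u⌋ + 1) * N := mul_lt_mul_of_pos_right (Int.lt_floor_add_one u) hNR
    _ = N * ⌊u⌋ + N := by ring

lemma floor_mul_emod (u : ℝ) (N : ℕ) (hN : 0 < N) :
    ⌊u * N⌋ = N * ⌊u⌋ + ⌊u * N⌋ % N := by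
  obtain ⟨h1, h2⟩ := floor_mul_bound u N hN
  have hr : ⌊u * N⌋ % (N:ℤ) = ⌊u * N⌋ - N * ⌊u⌋ := by
    have hs : (⌊u * N⌋ - (N:ℤ) * ⌊u⌋) % N = ⌊u * N⌋ % N := by simp [Int.sub_emod]
    rw [← hs, Int.emod_eq_of_lt (by linarith) (by linarith)]
  rw [hr]; ring

/-- digits 0..i-1 determine `⌊t * N^i⌋` on `[0,1)`. -/
lemma floor_det (N : ℕ) (hN : 0 < N) (t t' : ℝ) (ht : t ∈ Ico (0:ℝ) 1) (ht' : t' ∈ Ico (0:ℝ) 1) :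
    ∀ (i : ℕ), (∀ j < i, ⌊t * (N:ℝ)^(j+1)⌋ % (N:ℤ) = ⌊t' * (N:ℝ)^(j+1)⌋ % (N:ℤ)) →
    ⌊t * (N:ℝ)^i⌋ = ⌊t' * (N:ℝ)^i⌋ := by
  intro i
  induction i with
  | zero =>
    intro _
    simp only [pow_zero, mul_one]
    rw [Int.floor_eq_zero_iff.mpr ht, Int.floor_eq_zero_iff.mpr ht']
  | succ i ih =>
    intro h
    have hih := ih (fun j hj => h j (by omega))
    have e1 : t * (N:ℝ)^(i+1) = t * (N:ℝ)^i * N := by ring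
    have e2 : t' * (N:ℝ)^(i+1) = t' * (N:ℝ)^i * N := by ring
    have hm := h i (by omega)
    rw [e1, e2] at hm ⊢
    rw [floor_mul_emod _ N hN, floor_mul_emod (t' * (N:ℝ)^i) N hN, hih, hm]

lemma ball_sub_cyl (N : ℕ) (hN : 3 ≤ N)
    (d : (ℕ → Fin N) → (ℕ → Fin N) → ℝ)
    (hd : ∀ x y : ℕ → Fin N, x ≠ y → d x y = ((N : ℝ) ^ sInf {n : ℕ | x n ≠ y n})⁻¹)
    {ε : ℝ} (hε : 0 < ε) {x y : ℕ → Fin N} {n : ℕ}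
    (hy : y ∈ bowenBall d (fun x i => x (i+1)) n x (nrad ε n)) :
    ∀ j < n, y j = x j := by
  intro j hj
  by_contra hne
  have hxj : x j ≠ y j := fun h => hne h.symm
  have hd1 := hy j hj
  have hTne : (fun (x : ℕ → Fin N) i => x (i+1))^[j] x ≠ (fun (x : ℕ → Fin N) i => x (i+1))^[j] y := by
    rw [shift_iter', shift_iter']
    intro hcon
    exact hxj (by simpa using congrFun hcon 0)
  rw [hd _ _ hTne] at hd1
  have h0 : sInf {m : ℕ | (fun (x : ℕ → Fin N) i => x (i+1))^[j] x m
      ≠ (fun (x : ℕ → Fin N) i => x (i+1))^[j] y m} = 0 := by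
    apply Nat.sInf_eq_zero.mpr
    left
    simp only [mem_setOf_eq, shift_iter']
    simpa using hxj
  rw [h0, pow_zero, inv_one] at hd1
  have hlt : nrad ε n < 1 := by
    have hn' : 0 < n := Nat.zero_lt_of_lt hj
    have hn0 : (0:ℝ) < n := by exact_mod_cast hn'
    have : -(n:ℝ) * ε < 0 := by nlinarith
    simpa [nrad] using Real.exp_lt_one_iff.mpr this
  linarith

lemma cyl_sub_ball (N : ℕ) (hN : 3 ≤ N)
    (d : (ℕ → Fin N) → (ℕ → Fin N) → ℝ)
    (hd : ∀ x y : ℕ → Fin N, x ≠ y → d x y = ((N : ℝ) ^ sInf {n : ℕ | x n ≠ y n})⁻¹)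
    (hd0 : ∀ x : ℕ → Fin N, d x x = 0)
    {ε : ℝ} (hε : 0 < ε) (n : ℕ) (x y : ℕ → Fin N)
    (hagree : ∀ i < n + ⌈((n:ℝ)*ε)/Real.log N⌉₊ + 1, y i = x i) :
    y ∈ bowenBall d (fun x i => x (i+1)) n x (nrad ε n) := by
  have hNpos : (0:ℝ) < N := by positivity
  have hN1 : (1:ℝ) < N := by exact_mod_cast (by omega : 1 < N)
  have hlog : 0 < Real.log N := Real.log_pos hN1
  set c := ⌈((n:ℝ)*ε)/Real.log N⌉₊ with hc
  intro j hj
  by_cases hxy : (fun (x : ℕ → Fin N) i => x (i+1))^[j] x = (fun (x : ℕ → Fin N) i => x (i+1))^[j] y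
  · rw [hxy, hd0]
    exact Real.exp_pos _
  · rw [hd _ _ hxy]
    rw [shift_iter', shift_iter'] at hxy ⊢
    set S := {m : ℕ | (fun i => x (i + j)) m ≠ (fun i => y (i + j)) m} with hS
    have hSne : S.Nonempty := by
      rcases Function.ne_iff.mp hxy with ⟨m, hm⟩
      exact ⟨m, hm⟩
    have hmem := Nat.sInf_mem hSne
    have hge : c + 2 ≤ sInf S := by
      have : ¬ (sInf S + j < n + c + 1) := fun hlt => hmem (by simpa using (hagree _ hlt).symm)
      omega
    have h1 : ((N:ℝ) ^ sInf S)⁻¹ ≤ ((N:ℝ) ^ (c + 2))⁻¹ := by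
      apply inv_anti₀ (by positivity)
      exact pow_le_pow_right₀ hN1.le hge
    have h2 : ((N:ℝ) ^ (c + 2))⁻¹ < nrad ε n := by
      have hne : (N:ℝ) = Real.exp (Real.log N) := (Real.exp_log hNpos).symm
      rw [hne, ← Real.exp_nat_mul, ← Real.exp_neg, nrad]
      apply Real.exp_lt_exp.mpr
      have hceil : (n:ℝ)*ε/Real.log N ≤ (c:ℝ) := Nat.le_ceil _
      have : (n:ℝ)*ε ≤ (c:ℝ) * Real.log N := by
        rw [div_le_iff₀ hlog] at hceil; linarith
      push_cast
      nlinarith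
    linarith

lemma MN_zero (N : ℕ) (hN : 3 ≤ N)
    (d : (ℕ → Fin N) → (ℕ → Fin N) → ℝ)
    (hd : ∀ x y : ℕ → Fin N, x ≠ y → d x y = ((N : ℝ) ^ sInf {n : ℕ | x n ≠ y n})⁻¹)
    (hd0 : ∀ x : ℕ → Fin N, d x x = 0)
    {ε : ℝ} (hε : 0 < ε) {s : ℝ} (hs : Real.log N + ε < s) (N' : ℕ) :
    MN d (fun x i => x (i+1)) ε N' s (univ : Set (ℕ → Fin N)) = 0 := by
  have hNpos : (0:ℝ) < N := by positivity
  have hN1 : (1:ℝ) < N := by exact_mod_cast (by omega : 1 < N)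
  have hlog : 0 < Real.log N := Real.log_pos hN1
  set L : ℕ → ℕ := fun n => n + ⌈((n:ℝ)*ε)/Real.log N⌉₊ + 1 with hL
  set z0 : Fin N := ⟨0, by omega⟩ with hz0
  -- the cover of level n
  set Cn : ℕ → Set ((ℕ → Fin N) × ℕ) := fun n =>
    (fun w : Fin (L n) → Fin N => ((fun i => if h : i < L n then w ⟨i, h⟩ else z0), n)) '' univ with hCn
  -- MN is at most the sum over Cn n, for every n ≥ N'
  have hMN_le : ∀ n, N' ≤ n →
      MN d (fun x i => x (i+1)) ε N' s univ
        ≤ ENNReal.ofReal (Real.exp ((L n : ℝ) * Real.log N - n * s)) := by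
    intro n hn
    have hcount : (Cn n).Countable := ((finite_univ (α := Fin (L n) → Fin N)).image _).countable
    have hsnd : ∀ p ∈ Cn n, p.2 = n := by
      rintro p ⟨w, -, rfl⟩; rfl
    have hge : ∀ p ∈ Cn n, N' ≤ p.2 := fun p hp => (hsnd p hp) ▸ hn
    have hcover : (univ : Set (ℕ → Fin N)) ⊆ ⋃ p ∈ Cn n,
        bowenBall d (fun x i => x (i+1)) p.2 p.1 (nrad ε p.2) := by
      intro y _
      rw [mem_iUnion₂]
      refine ⟨((fun i => if h : i < L n then y i else z0), n), ⟨fun i => y i, mem_univ _, rfl⟩, ?_⟩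
      refine cyl_sub_ball N hN d hd hd0 hε n _ y (fun i hi => ?_)
      show y i = if h : i < L n then y i else z0
      rw [dif_pos (show i < L n from hi)]
    have hle1 : MN d (fun x i => x (i+1)) ε N' s univ
        ≤ ∑' p : Cn n, ENNReal.ofReal (Real.exp (-((p : (ℕ → Fin N) × ℕ).2 : ℝ) * s)) := by
      exact iInf_le_of_le (Cn n) (iInf_le_of_le hcount (iInf_le_of_le hge (iInf_le_of_le hcover le_rfl)))
    have hconst : ∑' p : Cn n, ENNReal.ofReal (Real.exp (-((p : (ℕ → Fin N) × ℕ).2 : ℝ) * s))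
        = ∑' _ : Cn n, ENNReal.ofReal (Real.exp (-(n : ℝ) * s)) := by
      apply tsum_congr
      intro p
      rw [hsnd p.1 p.2]
    have hinj : Function.Injective (fun p : Cn n => fun i : Fin (L n) => (p : (ℕ → Fin N) × ℕ).1 i) := by
      rintro ⟨p, wp, hu1, hwp⟩ ⟨q, wq, hu2, hwq⟩ h
      apply Subtype.ext
      show p = q
      revert h
      subst hwp hwq
      intro h
      simp only at h
      simp only [Prod.mk.injEq]
      refine ⟨?_, trivial⟩
      funext i
      by_cases hi : i < L n
      · have hh := congrFun h ⟨i, hi⟩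
        simp only [dif_pos hi] at hh
        simp only [dif_pos hi]
        exact hh
      · simp [hi]
    have hle2 : ∑' _ : Cn n, ENNReal.ofReal (Real.exp (-(n : ℝ) * s))
        ≤ (N : ℝ≥0∞) ^ (L n) * ENNReal.ofReal (Real.exp (-(n : ℝ) * s)) := by
      calc ∑' _ : Cn n, ENNReal.ofReal (Real.exp (-(n : ℝ) * s))
          ≤ ∑' _ : Fin (L n) → Fin N, ENNReal.ofReal (Real.exp (-(n : ℝ) * s)) :=
            ENNReal.tsum_comp_le_tsum_of_injective hinj _
        _ = (Fintype.card (Fin (L n) → Fin N)) * ENNReal.ofReal (Real.exp (-(n : ℝ) * s)) := by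
            rw [tsum_fintype]
            simp [Finset.sum_const, nsmul_eq_mul]
        _ = (N : ℝ≥0∞) ^ (L n) * ENNReal.ofReal (Real.exp (-(n : ℝ) * s)) := by
            rw [Fintype.card_fun]
            simp
    have heq : (N : ℝ≥0∞) ^ (L n) * ENNReal.ofReal (Real.exp (-(n : ℝ) * s))
        = ENNReal.ofReal (Real.exp ((L n : ℝ) * Real.log N - n * s)) := by
      rw [← ENNReal.ofReal_natCast N, ← ENNReal.ofReal_pow (by positivity),
        ← ENNReal.ofReal_mul (by positivity)]
      congr 1
      rw [Real.exp_sub, Real.exp_nat_mul, Real.exp_log hNpos, neg_mul, Real.exp_neg,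
        div_eq_mul_inv]
    calc MN d (fun x i => x (i+1)) ε N' s univ
        ≤ ∑' p : Cn n, ENNReal.ofReal (Real.exp (-((p : (ℕ → Fin N) × ℕ).2 : ℝ) * s)) := hle1
      _ = ∑' _ : Cn n, ENNReal.ofReal (Real.exp (-(n : ℝ) * s)) := hconst
      _ ≤ (N : ℝ≥0∞) ^ (L n) * ENNReal.ofReal (Real.exp (-(n : ℝ) * s)) := hle2
      _ = ENNReal.ofReal (Real.exp ((L n : ℝ) * Real.log N - n * s)) := heq
  -- the bound tends to 0
  have hbnd : ∀ n : ℕ, (L n : ℝ) * Real.log N - n * s ≤ (-(s - Real.log N - ε)) * n + 2 * Real.log N := by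
    intro n
    have hnn : (0:ℝ) ≤ (n:ℝ) * ε / Real.log N := by positivity
    have hc : (⌈((n:ℝ)*ε)/Real.log N⌉₊ : ℝ) < (n:ℝ)*ε/Real.log N + 1 := Nat.ceil_lt_add_one hnn
    have hc2 : (⌈((n:ℝ)*ε)/Real.log N⌉₊ : ℝ) * Real.log N ≤ (n:ℝ)*ε + Real.log N := by
      have := mul_le_mul_of_nonneg_right hc.le hlog.le
      rw [add_mul, div_mul_cancel₀ _ hlog.ne'] at this
      linarith
    have : (L n : ℝ) = (n : ℝ) + (⌈((n:ℝ)*ε)/Real.log N⌉₊ : ℝ) + 1 := by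
      simp only [hL]; push_cast; ring
    rw [this]
    nlinarith
  have htend : Tendsto (fun n : ℕ => ENNReal.ofReal (Real.exp ((L n : ℝ) * Real.log N - n * s)))
      atTop (nhds 0) := by
    have h1 : Tendsto (fun n : ℕ => (-(s - Real.log N - ε)) * n + 2 * Real.log N) atTop atBot := by
      apply tendsto_atBot_add_const_right
      apply Tendsto.const_mul_atTop_of_neg (by linarith : -(s - Real.log N - ε) < 0)
      exact tendsto_natCast_atTop_atTop
    have h2 : Tendsto (fun n : ℕ => (L n : ℝ) * Real.log N - n * s) atTop atBot :=
      tendsto_atBot_mono hbnd h1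
    have h3 := Real.tendsto_exp_atBot.comp h2
    have h4 := ENNReal.tendsto_ofReal (a := 0) h3
    simpa using h4
  -- conclude
  apply le_antisymm _ (zero_le)
  refine ENNReal.le_of_forall_pos_le_add fun η hη _ => ?_
  have hev := (htend.eventually (gt_mem_nhds (show (0:ℝ≥0∞) < η from ENNReal.coe_pos.mpr hη))).and
    (eventually_ge_atTop N')
  obtain ⟨n, hlt, hn⟩ := hev.exists
  calc MN d (fun x i => x (i+1)) ε N' s univ
      ≤ ENNReal.ofReal (Real.exp ((L n : ℝ) * Real.log N - n * s)) := hMN_le n hn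
    _ ≤ η := hlt.le
    _ = 0 + η := (zero_add _).symm

lemma MN_lower (N : ℕ) (hN : 3 ≤ N)
    (d : (ℕ → Fin N) → (ℕ → Fin N) → ℝ)
    (hd : ∀ x y : ℕ → Fin N, x ≠ y → d x y = ((N : ℝ) ^ sInf {n : ℕ | x n ≠ y n})⁻¹)
    {ε : ℝ} (hε : 0 < ε) {s : ℝ} (hs : s ≤ Real.log N) :
    (2:ℝ≥0∞)⁻¹ ≤ MN d (fun x i => x (i+1)) ε 0 s (univ : Set (ℕ → Fin N)) := by
  have hN0 : 0 < N := by omega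
  have hNpos : (0:ℝ) < N := by positivity
  have hN1 : (1:ℝ) < N := by exact_mod_cast (by omega : 1 < N)
  have hlog : 0 < Real.log N := Real.log_pos hN1
  refine le_iInf fun C => le_iInf fun hC => le_iInf fun _ => le_iInf fun hcov => ?_
  -- digits
  set dig : ℝ → ℕ → ℕ := fun t j => (⌊t * (N:ℝ)^(j+1)⌋ % (N:ℤ)).toNat with hdig
  have hdiglt : ∀ t j, dig t j < N := by
    intro t j
    have h1 := Int.emod_nonneg ⌊t * (N:ℝ)^(j+1)⌋ (show (N:ℤ) ≠ 0 by exact_mod_cast hN0.ne')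
    have h2 := Int.emod_lt_of_pos ⌊t * (N:ℝ)^(j+1)⌋ (show (0:ℤ) < N by exact_mod_cast hN0)
    simp only [hdig]
    omega
  set f : ℝ → (ℕ → Fin N) := fun t j => ⟨dig t j, hdiglt t j⟩ with hf
  set S : ((ℕ → Fin N) × ℕ) → Set ℝ :=
    fun p => {t | t ∈ Ico (0:ℝ) 1 ∧ ∀ j < p.2, dig t j = (p.1 j : ℕ)} with hS
  have hcovS : Ico (0:ℝ) 1 ⊆ ⋃ p ∈ C, S p := by
    intro t ht
    have hft := hcov (mem_univ (f t))
    rw [mem_iUnion₂] at hft ⊢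
    obtain ⟨p, hpC, hpball⟩ := hft
    refine ⟨p, hpC, ht, fun j hj => ?_⟩
    have hfp := ball_sub_cyl N hN d hd hε hpball j hj
    have : (f t j : ℕ) = (p.1 j : ℕ) := congrArg Fin.val hfp
    simpa [hf] using this
  have hSvol : ∀ p : (ℕ → Fin N) × ℕ,
      volume (S p) ≤ 2 * ENNReal.ofReal (Real.exp (-(p.2:ℝ) * s)) := by
    intro p
    rcases (S p).eq_empty_or_nonempty with hSe | ⟨t₀, ht₀⟩
    · simp [hSe]
    · have hNp : (0:ℝ) < (N:ℝ) ^ p.2 := by positivity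
      set r : ℝ := ((N:ℝ) ^ p.2)⁻¹ with hr
      have hrpos : 0 < r := by positivity
      have hsub : S p ⊆ Icc (t₀ - r) (t₀ + r) := by
        intro t ht
        have hfl : ⌊t * (N:ℝ) ^ p.2⌋ = ⌊t₀ * (N:ℝ) ^ p.2⌋ := by
          apply floor_det N hN0 t t₀ ht.1 ht₀.1 p.2
          intro j hj
          have h1 : dig t j = (p.1 j : ℕ) := ht.2 j hj
          have h2 : dig t₀ j = (p.1 j : ℕ) := ht₀.2 j hj
          have h3 := Int.emod_nonneg ⌊t * (N:ℝ)^(j+1)⌋ (show (N:ℤ) ≠ 0 by exact_mod_cast hN0.ne')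
          have h4 := Int.emod_nonneg ⌊t₀ * (N:ℝ)^(j+1)⌋ (show (N:ℤ) ≠ 0 by exact_mod_cast hN0.ne')
          simp only [hdig] at h1 h2
          omega
        have key : ∀ a b : ℝ, a * ((N:ℝ) ^ p.2) ≤ b * ((N:ℝ) ^ p.2) + 1 → a ≤ b + r := by
          intro a b hab
          rw [← mul_le_mul_iff_left₀ hNp, add_mul, hr, inv_mul_cancel₀ hNp.ne']
          exact hab
        have hub : t * (N:ℝ) ^ p.2 ≤ t₀ * (N:ℝ) ^ p.2 + 1 := by
          have g1 := Int.lt_floor_add_one (t * (N:ℝ) ^ p.2)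
          have g2 := Int.floor_le (t₀ * (N:ℝ) ^ p.2)
          rw [hfl] at g1
          linarith
        have hlb : t₀ * (N:ℝ) ^ p.2 ≤ t * (N:ℝ) ^ p.2 + 1 := by
          have g1 := Int.lt_floor_add_one (t₀ * (N:ℝ) ^ p.2)
          have g2 := Int.floor_le (t * (N:ℝ) ^ p.2)
          rw [hfl] at g2
          linarith
        have h5 := key t t₀ hub
        have h6 := key t₀ t hlb
        exact ⟨by linarith, by linarith⟩
      calc volume (S p) ≤ volume (Icc (t₀ - r) (t₀ + r)) := measure_mono hsub
        _ = ENNReal.ofReal (2 * r) := by rw [Real.volume_Icc]; congr 1; ring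
        _ = 2 * ENNReal.ofReal r := by
            rw [ENNReal.ofReal_mul (by norm_num)]; congr 1; norm_num
        _ ≤ 2 * ENNReal.ofReal (Real.exp (-(p.2:ℝ) * s)) := by
            apply mul_le_mul_right
            apply ENNReal.ofReal_le_ofReal
            have : r = Real.exp (-(p.2:ℝ) * Real.log N) := by
              rw [hr, neg_mul, Real.exp_neg, Real.exp_nat_mul, Real.exp_log hNpos]
            rw [this]
            apply Real.exp_le_exp_of_le
            have : (p.2:ℝ) * s ≤ (p.2:ℝ) * Real.log N :=
              mul_le_mul_of_nonneg_left hs (by positivity)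
            linarith
  have hkey : (1:ℝ≥0∞) ≤ 2 * ∑' p : C, ENNReal.ofReal (Real.exp (-((p : ((ℕ → Fin N) × ℕ)).2 : ℝ) * s)) := by
    calc (1:ℝ≥0∞) = volume (Ico (0:ℝ) 1) := by simp
      _ ≤ volume (⋃ p ∈ C, S p) := measure_mono hcovS
      _ ≤ ∑' p : C, volume (S (p : ((ℕ → Fin N) × ℕ))) := measure_biUnion_le volume hC S
      _ ≤ ∑' p : C, 2 * ENNReal.ofReal (Real.exp (-((p : ((ℕ → Fin N) × ℕ)).2 : ℝ) * s)) :=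
          ENNReal.tsum_le_tsum (fun p => hSvol p.1)
      _ = 2 * ∑' p : C, ENNReal.ofReal (Real.exp (-((p : ((ℕ → Fin N) × ℕ)).2 : ℝ) * s)) :=
          ENNReal.tsum_mul_left
  calc (2:ℝ≥0∞)⁻¹ = 2⁻¹ * 1 := (mul_one _).symm
    _ ≤ 2⁻¹ * (2 * ∑' p : C, ENNReal.ofReal (Real.exp (-((p : ((ℕ → Fin N) × ℕ)).2 : ℝ) * s))) :=
        mul_le_mul_right hkey _
    _ = ∑' p : C, ENNReal.ofReal (Real.exp (-((p : ((ℕ → Fin N) × ℕ)).2 : ℝ) * s)) := by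
        rw [← mul_assoc, ENNReal.inv_mul_cancel (by norm_num) (by norm_num), one_mul]

end NeutralizedHelpers

/-- For the one-sided full shift on `N ≥ 3` symbols, with the metric
`d(x,y) = N^{-min{n : x_n ≠ y_n}}` (and `d(x,x) = 0`), the neutralized Bowen topological
entropy of the full space equals `log N`. -/
theorem htopB_full_shift (N : ℕ) (hN : 3 ≤ N)
    (d : (ℕ → Fin N) → (ℕ → Fin N) → ℝ)
    (hd : ∀ x y : ℕ → Fin N, x ≠ y → d x y = ((N : ℝ) ^ sInf {n : ℕ | x n ≠ y n})⁻¹)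
    (hd0 : ∀ x : ℕ → Fin N, d x x = 0) :
    htopB d (fun x i => x (i + 1)) (univ : Set (ℕ → Fin N)) = ENNReal.ofReal (Real.log N) := by
  have hN0 : 0 < N := by omega
  have hN1 : (1:ℝ) < N := by exact_mod_cast (by omega : 1 < N)
  have hlog : 0 < Real.log N := Real.log_pos hN1
  apply le_antisymm
  · refine ENNReal.le_of_forall_pos_le_add fun η hη _ => ?_
    have hηR : (0:ℝ) < (η:ℝ) := hη
    set ε : ℝ := (η:ℝ)/2 with hεdef
    have hε : 0 < ε := by positivity
    set s₀ : ℝ≥0 := Real.toNNReal (Real.log N + η) with hs₀def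
    have hs₀ : (s₀:ℝ) = Real.log N + η := Real.coe_toNNReal _ (by positivity)
    have hzero : Mlim d (fun x i => x (i+1)) ε (s₀:ℝ) (univ : Set (ℕ → Fin N)) = 0 := by
      rw [Mlim, ENNReal.iSup_eq_zero]
      intro N'
      exact MN_zero N hN d hd hd0 hε (by rw [hs₀]; linarith) N'
    have h1 : htopB d (fun x i => x (i+1)) (univ : Set (ℕ → Fin N))
        ≤ Mcrit d (fun x i => x (i+1)) ε univ := by
      rw [htopB]; exact iInf₂_le ε hε
    have h2 : Mcrit d (fun x i => x (i+1)) ε (univ : Set (ℕ → Fin N)) ≤ (s₀ : ℝ≥0∞) := by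
      rw [Mcrit]; exact iInf₂_le s₀ hzero
    have h3 : (s₀ : ℝ≥0∞) = ENNReal.ofReal (Real.log N) + η := by
      rw [← ENNReal.ofReal_coe_nnreal, hs₀, ENNReal.ofReal_add hlog.le (by positivity),
        ENNReal.ofReal_coe_nnreal]
    exact le_trans h1 (le_trans h2 (le_of_eq h3))
  · rw [htopB]
    refine le_iInf fun ε => le_iInf fun hε => ?_
    rw [Mcrit]
    refine le_iInf fun s => le_iInf fun hMl => ?_
    by_contra hcon
    push_neg at hcon
    have hsle : (s:ℝ) ≤ Real.log N := by
      by_contra hgt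
      push_neg at hgt
      have : ENNReal.ofReal (Real.log N) ≤ (s:ℝ≥0∞) := by
        rw [← ENNReal.ofReal_coe_nnreal]
        exact ENNReal.ofReal_le_ofReal hgt.le
      exact absurd hcon (not_lt.mpr this)
    have h2 := MN_lower N hN d hd hε hsle
    have h3 : (2:ℝ≥0∞)⁻¹ ≤ Mlim d (fun x i => x (i+1)) ε (s:ℝ) (univ : Set (ℕ → Fin N)) := by
      rw [Mlim]
      exact le_trans h2 (le_iSup (fun N' => MN d (fun x i => x (i+1)) ε N' (s:ℝ) (univ : Set (ℕ → Fin N))) 0)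
    rw [hMl] at h3
    simp at h3
end

section
/- Let N ≥ 3, let Σ_N = {0,…,N−1}^ℕ be the one-sided full shift with the shift map σ and metric d(x,y) = N^{−min{ n ≥ 0 : x_n ≠ y_n }} (d(x,x)=0), and let μ be the (1/N,…,1/N)-Bernoulli product measure on Σ_N. Then the lower neutralized Brin–Katok local entropy of μ equals log N: h̲_μ^{B̃K}(σ) = log N. -/
open Filter Set MeasureTheory ENNReal NNReal Topology

variable {X : Type*}

private lemma shiftIter {N : ℕ} (j : ℕ) (x : ℕ → Fin N) (i : ℕ) :
    (fun (x : ℕ → Fin N) i => x (i + 1))^[j] x i = x (i + j) := by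
  induction j generalizing x i with
  | zero => simp
  | succ j ih =>
    rw [Function.iterate_succ_apply, ih, Nat.add_assoc]

/-- For the one-sided full shift on `N ≥ 3` symbols with the metric
`d(x,y) = N^{-min{n : x_n ≠ y_n}}` and the `(1/N,…,1/N)`-Bernoulli product measure `μ`
(characterized by assigning mass `N^{-n}` to every cylinder of length `n`), the lower
neutralized Brin–Katok local entropy of `μ` equals `log N`. -/
theorem lowerBK_full_shift (N : ℕ) (hN : 3 ≤ N)
    (d : (ℕ → Fin N) → (ℕ → Fin N) → ℝ)
    (hd : ∀ x y : ℕ → Fin N, x ≠ y → d x y = ((N : ℝ) ^ sInf {n : ℕ | x n ≠ y n})⁻¹)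
    (hd0 : ∀ x : ℕ → Fin N, d x x = 0)
    (μ : Measure (ℕ → Fin N)) (hμ : IsProbabilityMeasure μ)
    (hcyl : ∀ (x : ℕ → Fin N) (n : ℕ),
      μ {y : ℕ → Fin N | ∀ j < n, y j = x j} = ((N : ℝ≥0∞))⁻¹ ^ n) :
    ⨅ (ε : ℝ) (_ : 0 < ε), lowerBK d (fun x i => x (i + 1)) μ ε
      = ENNReal.ofReal (Real.log N) := by
  classical
  have hN1 : (1:ℝ) < (N:ℝ) := by
    have : (3:ℝ) ≤ (N:ℝ) := by exact_mod_cast hN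
    linarith
  have hNpos : (0:ℝ) < N := by linarith
  have hL : 0 < Real.log N := Real.log_pos hN1
  set T : (ℕ → Fin N) → (ℕ → Fin N) := fun x i => x (i + 1) with hTdef
  -- numeric core
  have hnum : ∀ (t : ℝ), 0 ≤ t → ∀ m : ℕ,
      (((N:ℝ) ^ m)⁻¹ < Real.exp (-t) ↔ Nat.floor (t / Real.log N) < m) := by
    intro t ht m
    have hNm : (0:ℝ) < (N:ℝ) ^ m := pow_pos hNpos m
    rw [Real.exp_neg, inv_lt_inv₀ hNm (Real.exp_pos t),
      ← Real.lt_log_iff_exp_lt hNm, Real.log_pow,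
      ← div_lt_iff₀ hL, Nat.floor_lt (div_nonneg ht hL.le)]
  -- distance vs. cylinder
  have hdlt : ∀ (t : ℝ), 0 ≤ t → ∀ u v : ℕ → Fin N,
      (d u v < Real.exp (-t) ↔ ∀ i ≤ Nat.floor (t / Real.log N), u i = v i) := by
    intro t ht u v
    by_cases huv : u = v
    · subst huv; simp [hd0, Real.exp_pos]
    · have hS : {n : ℕ | u n ≠ v n}.Nonempty := Function.ne_iff.mp huv
      rw [hd u v huv, hnum t ht (sInf {n | u n ≠ v n})]
      constructor
      · intro h i hi
        by_contra hne
        have : sInf {n : ℕ | u n ≠ v n} ≤ i := Nat.sInf_le hne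
        omega
      · intro h
        have hmem : sInf {n : ℕ | u n ≠ v n} ∈ {n : ℕ | u n ≠ v n} := Nat.sInf_mem hS
        by_contra hle
        push_neg at hle
        exact hmem (h _ hle)
  -- Bowen ball is a cylinder
  have hball : ∀ (ε : ℝ), 0 < ε → ∀ (x : ℕ → Fin N) (n : ℕ), 1 ≤ n →
      bowenBall d T n x (nrad ε n)
        = {y | ∀ j < n + Nat.floor (((n:ℝ) * ε) / Real.log N), y j = x j} := by
    intro ε hε x n hn
    have ht : (0:ℝ) ≤ (n:ℝ) * ε := by positivity
    set K := Nat.floor (((n:ℝ) * ε) / Real.log N) with hK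
    ext y
    simp only [bowenBall, mem_setOf_eq, nrad, neg_mul]
    have hrw : ∀ j, (d (T^[j] x) (T^[j] y) < Real.exp (-((n:ℝ) * ε)) ↔
        ∀ i ≤ K, x (i + j) = y (i + j)) := by
      intro j
      rw [hdlt ((n:ℝ) * ε) ht]
      constructor
      · intro h i hi
        have := h i hi
        rwa [hTdef, shiftIter, shiftIter] at this
      · intro h i hi
        rw [hTdef, shiftIter, shiftIter]
        exact h i hi
    constructor
    · intro h m hm
      by_cases hmn : m < n
      · have := (hrw m).mp (h m hmn) 0 (Nat.zero_le _)
        simpa using this.symm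
      · have h1 : n - 1 < n := by omega
        have := (hrw (n-1)).mp (h (n-1) h1) (m - (n-1)) (by omega)
        have hmm : (m - (n-1)) + (n-1) = m := by omega
        rw [hmm] at this
        exact this.symm
    · intro h j hj
      rw [hrw j]
      intro i hi
      exact (h (i + j) (by omega)).symm
  -- measure of the Bowen ball
  have hmeas : ∀ (ε : ℝ), 0 < ε → ∀ (x : ℕ → Fin N) (n : ℕ), 1 ≤ n →
      μ (bowenBall d T n x (nrad ε n))
        = ((N:ℝ≥0∞))⁻¹ ^ (n + Nat.floor (((n:ℝ) * ε) / Real.log N)) := by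
    intro ε hε x n hn
    rw [hball ε hε x n hn]
    exact hcyl x _
  -- negLog of the measure
  have hNne0 : ((N:ℝ≥0∞)) ≠ 0 := by
    simp only [ne_eq, Nat.cast_eq_zero]; omega
  have hneg : ∀ m : ℕ, negLog (((N:ℝ≥0∞))⁻¹ ^ m)
      = ENNReal.ofReal ((m:ℝ) * Real.log N) := by
    intro m
    have h0 : ((N:ℝ≥0∞))⁻¹ ^ m ≠ 0 := by
      apply pow_ne_zero
      simp [ENNReal.inv_ne_zero]
    rw [negLog, if_neg h0]
    congr 1
    have htr : (((N:ℝ≥0∞))⁻¹ ^ m).toReal = ((N:ℝ)⁻¹) ^ m := by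
      rw [ENNReal.toReal_pow, ENNReal.toReal_inv, ENNReal.toReal_natCast]
    rw [htr, Real.log_pow, Real.log_inv]
    ring
  -- bounds on the liminf integrand
  have hterm : ∀ (ε : ℝ), 0 < ε → ∀ (x : ℕ → Fin N) (n : ℕ), 1 ≤ n →
      ENNReal.ofReal (Real.log N)
        ≤ negLog (μ (bowenBall d T n x (nrad ε n))) / (n : ℝ≥0∞) ∧
      negLog (μ (bowenBall d T n x (nrad ε n))) / (n : ℝ≥0∞)
        ≤ ENNReal.ofReal (Real.log N + ε) := by
    intro ε hε x n hn
    have hn0 : ((n:ℝ≥0∞)) ≠ 0 := by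
      simp only [ne_eq, Nat.cast_eq_zero]; omega
    have hnt : ((n:ℝ≥0∞)) ≠ ⊤ := ENNReal.natCast_ne_top n
    set K := Nat.floor (((n:ℝ) * ε) / Real.log N) with hKdef
    rw [hmeas ε hε x n hn, hneg]
    have hcast : ((n:ℝ≥0∞)) = ENNReal.ofReal ((n:ℝ)) := (ENNReal.ofReal_natCast n).symm
    have hKle : (K:ℝ) * Real.log N ≤ (n:ℝ) * ε := by
      have := Nat.floor_le (R := ℝ) (div_nonneg (by positivity) hL.le)
        (a := ((n:ℝ) * ε) / Real.log N)
      calc (K:ℝ) * Real.log N ≤ (((n:ℝ) * ε) / Real.log N) * Real.log N := by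
            apply mul_le_mul_of_nonneg_right _ hL.le
            exact this
        _ = (n:ℝ) * ε := by field_simp
    constructor
    · rw [ENNReal.le_div_iff_mul_le (Or.inl hn0) (Or.inl hnt), hcast,
        ← ENNReal.ofReal_mul (le_of_lt hL)]
      apply ENNReal.ofReal_le_ofReal
      push_cast
      nlinarith [hL.le, Nat.cast_nonneg (α := ℝ) K, Nat.cast_nonneg (α := ℝ) n]
    · rw [ENNReal.div_le_iff_le_mul (Or.inl hn0) (Or.inl hnt), hcast,
        ← ENNReal.ofReal_mul (by positivity)]
      apply ENNReal.ofReal_le_ofReal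
      push_cast
      nlinarith [hKle, Nat.cast_nonneg (α := ℝ) n]
  -- bounds on lowerBK
  have hBK : ∀ (ε : ℝ), 0 < ε →
      ENNReal.ofReal (Real.log N) ≤ lowerBK d T μ ε ∧
      lowerBK d T μ ε ≤ ENNReal.ofReal (Real.log N + ε) := by
    intro ε hε
    have hlim : ∀ x : ℕ → Fin N,
        ENNReal.ofReal (Real.log N) ≤
          liminf (fun n : ℕ => negLog (μ (bowenBall d T n x (nrad ε n))) / (n : ℝ≥0∞)) atTop ∧
        liminf (fun n : ℕ => negLog (μ (bowenBall d T n x (nrad ε n))) / (n : ℝ≥0∞)) atTop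
          ≤ ENNReal.ofReal (Real.log N + ε) := by
      intro x
      constructor
      · have hev : ∀ᶠ n : ℕ in atTop, ENNReal.ofReal (Real.log N)
            ≤ negLog (μ (bowenBall d T n x (nrad ε n))) / (n : ℝ≥0∞) := by
          filter_upwards [eventually_ge_atTop 1] with n hn
          exact (hterm ε hε x n hn).1
        have := Filter.liminf_le_liminf (f := atTop)
          (u := fun _ : ℕ => ENNReal.ofReal (Real.log N))
          (v := fun n : ℕ => negLog (μ (bowenBall d T n x (nrad ε n))) / (n : ℝ≥0∞)) hev
        simpa using this
      · have hev : ∀ᶠ n : ℕ in atTop,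
            negLog (μ (bowenBall d T n x (nrad ε n))) / (n : ℝ≥0∞)
              ≤ ENNReal.ofReal (Real.log N + ε) := by
          filter_upwards [eventually_ge_atTop 1] with n hn
          exact (hterm ε hε x n hn).2
        have := Filter.liminf_le_liminf (f := atTop)
          (u := fun n : ℕ => negLog (μ (bowenBall d T n x (nrad ε n))) / (n : ℝ≥0∞))
          (v := fun _ : ℕ => ENNReal.ofReal (Real.log N + ε)) hev
        simpa using this
    constructor
    · calc ENNReal.ofReal (Real.log N)
          = ∫⁻ _, ENNReal.ofReal (Real.log N) ∂μ := by
            rw [lintegral_const, measure_univ, mul_one]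
      _ ≤ lowerBK d T μ ε := lintegral_mono fun x => (hlim x).1
    · calc lowerBK d T μ ε
          ≤ ∫⁻ _, ENNReal.ofReal (Real.log N + ε) ∂μ := lintegral_mono fun x => (hlim x).2
      _ = ENNReal.ofReal (Real.log N + ε) := by
            rw [lintegral_const, measure_univ, mul_one]
  apply le_antisymm
  · apply ENNReal.le_of_forall_pos_le_add
    intro δ hδ _
    have h1 : (⨅ (ε : ℝ) (_ : 0 < ε), lowerBK d T μ ε) ≤ lowerBK d T μ δ :=
      iInf₂_le (δ:ℝ) (by exact_mod_cast hδ)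
    refine h1.trans ((hBK δ (by exact_mod_cast hδ)).2.trans ?_)
    rw [ENNReal.ofReal_add hL.le (by positivity), ENNReal.ofReal_coe_nnreal]
  · exact le_iInf₂ fun ε hε => (hBK ε hε).1
end
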